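/- arXiv:0801.2058 — 14 statements merged into one kernel-verified Lean document; each statement's English description precedes it below -/
import Mathlib

section
/- The extended Schrödinger-Virasoro Lie algebra sv~ is perfect, i.e., [sv~, sv~] = sv~. -/
/-- Index type for the basis of the extended Schrödinger-Virasoro Lie algebra.
`Y n` stands for the generator `Y_{n+1/2}`. -/
inductive SVIdx : Type
  | L : ℤ → SVIdx
  | M : ℤ → SVIdx
  | N : ℤ → SVIdx
  | Y : ℤ → SVIdx

/-- A complex Lie algebra `g` is (a copy of) the extended Schrödinger-Virasoro
Lie algebra if it has a basis indexed by `SVIdx` whose brackets are given by the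
structure constants of `sv~`. -/
structure ExtSV (g : Type*) [LieRing g] [LieAlgebra ℂ g] where
  b : Module.Basis SVIdx ℂ g
  LL : ∀ m n : ℤ, ⁅b (SVIdx.L m), b (SVIdx.L n)⁆ = ((n : ℂ) - (m : ℂ)) • b (SVIdx.L (m + n))
  MM : ∀ m n : ℤ, ⁅b (SVIdx.M m), b (SVIdx.M n)⁆ = 0
  NN : ∀ m n : ℤ, ⁅b (SVIdx.N m), b (SVIdx.N n)⁆ = 0
  YY : ∀ m n : ℤ, ⁅b (SVIdx.Y m), b (SVIdx.Y n)⁆ = ((m : ℂ) - (n : ℂ)) • b (SVIdx.M (m + n + 1))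
  LM : ∀ m n : ℤ, ⁅b (SVIdx.L m), b (SVIdx.M n)⁆ = (n : ℂ) • b (SVIdx.M (m + n))
  LN : ∀ m n : ℤ, ⁅b (SVIdx.L m), b (SVIdx.N n)⁆ = (n : ℂ) • b (SVIdx.N (m + n))
  LY : ∀ m n : ℤ, ⁅b (SVIdx.L m), b (SVIdx.Y n)⁆ =
      ((n : ℂ) + (1 - (m : ℂ)) / 2) • b (SVIdx.Y (m + n))
  NM : ∀ m n : ℤ, ⁅b (SVIdx.N m), b (SVIdx.M n)⁆ = (2 : ℂ) • b (SVIdx.M (m + n))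
  NY : ∀ m n : ℤ, ⁅b (SVIdx.N m), b (SVIdx.Y n)⁆ = b (SVIdx.Y (m + n))
  MY : ∀ m n : ℤ, ⁅b (SVIdx.M m), b (SVIdx.Y n)⁆ = 0

/-!
Every basis vector is a multiple of a single bracket, or of a difference of two:
`Y_{n+1/2} = [N_0, Y_{n+1/2}]`, `M_n = ½ [N_0, M_n]`, `N_n = [L_{n-1}, N_1]`, and
`L_n = -¼ ([L_{n+1}, L_{-1}] - [L_{n-1}, L_1])`. Hence the derived algebra contains a basis.
-/

theorem LieIdeal.eq_top_of_basis_mem {ι R L : Type*} [CommRing R] [LieRing L] [LieAlgebra R L]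
    (b : Module.Basis ι R L) (I : LieIdeal R L) (hI : ∀ i, b i ∈ I) : I = ⊤ := by
  rw [← LieSubmodule.toSubmodule_eq_top, eq_top_iff, ← b.span_eq, Submodule.span_le]
  rintro _ ⟨i, rfl⟩
  exact hI i

theorem LieIdeal.lie_mem_lie_top_top {R L : Type*} [CommRing R] [LieRing L] [LieAlgebra R L]
    (x y : L) : ⁅x, y⁆ ∈ ⁅(⊤ : LieIdeal R L), (⊤ : LieIdeal R L)⁆ :=
  LieSubmodule.lie_mem_lie (LieSubmodule.mem_top x) (LieSubmodule.mem_top y)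

namespace ExtSV

variable {g : Type*} [LieRing g] [LieAlgebra ℂ g] (h : ExtSV g)

theorem b_L_eq_lie_sub_lie (n : ℤ) :
    h.b (SVIdx.L n) = (-1 / 4 : ℂ) •
      (⁅h.b (SVIdx.L (n + 1)), h.b (SVIdx.L (-1))⁆ - ⁅h.b (SVIdx.L (n - 1)), h.b (SVIdx.L 1)⁆) := by
  rw [h.LL, h.LL, add_neg_cancel_right, sub_add_cancel, ← sub_smul, smul_smul]
  push_cast
  ring_nf
  rw [one_smul]

theorem b_M_eq_lie (n : ℤ) : h.b (SVIdx.M n) = (1 / 2 : ℂ) • ⁅h.b (SVIdx.N 0), h.b (SVIdx.M n)⁆ := by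
  rw [h.NM, zero_add, smul_smul]
  norm_num

theorem b_N_eq_lie (n : ℤ) : h.b (SVIdx.N n) = ⁅h.b (SVIdx.L (n - 1)), h.b (SVIdx.N 1)⁆ := by
  rw [h.LN, sub_add_cancel]
  norm_num

theorem b_Y_eq_lie (n : ℤ) : h.b (SVIdx.Y n) = ⁅h.b (SVIdx.N 0), h.b (SVIdx.Y n)⁆ := by
  rw [h.NY, zero_add]

theorem b_mem_lie_top_top (i : SVIdx) : h.b i ∈ ⁅(⊤ : LieIdeal ℂ g), (⊤ : LieIdeal ℂ g)⁆ := by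
  open LieIdeal in
  cases i with
  | L n =>
    rw [h.b_L_eq_lie_sub_lie n]
    exact Submodule.smul_mem _ _ (sub_mem (lie_mem_lie_top_top _ _) (lie_mem_lie_top_top _ _))
  | M n =>
    rw [h.b_M_eq_lie n]
    exact Submodule.smul_mem _ _ (lie_mem_lie_top_top _ _)
  | N n =>
    rw [h.b_N_eq_lie n]
    exact lie_mem_lie_top_top _ _
  | Y n =>
    rw [h.b_Y_eq_lie n]
    exact lie_mem_lie_top_top _ _

end ExtSV

/-- The extended Schrödinger-Virasoro Lie algebra is perfect: `[sv~, sv~] = sv~`. -/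
theorem extSV_perfect {g : Type*} [LieRing g] [LieAlgebra ℂ g] (h : ExtSV g) :
    ⁅(⊤ : LieIdeal ℂ g), (⊤ : LieIdeal ℂ g)⁆ = ⊤ :=
  LieIdeal.eq_top_of_basis_mem h.b _ h.b_mem_lie_top_top
end

section
/- The extended Schrödinger-Virasoro Lie algebra sv~ is generated as a Lie algebra by the six elements L_{−2}, L_{−1}, L_1, L_2, N_1, Y_{1/2}. -/
/-! Brackets of generators produce every basis vector up to a nonzero scalar: `L_0 ∝ [L_{-1}, L_1]`,
the other `L_n` by `[L_{±1}, L_{±n}] = ±(1 - n) L_{±(n+1)}` starting from `L_{±2}`, then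
`N_n ∝ [L_{n-1}, N_1]`, `Y_{n+1/2} = [N_n, Y_{1/2}]` and `M_n ∝ [Y_{n+1/2}, Y_{-1/2}]`
(with `M_{-1} ∝ [Y_{1/2}, Y_{-3/2}]`). -/

namespace LieSubalgebra

variable {K L : Type*} [Field K] [LieRing L] [LieAlgebra K L] (S : LieSubalgebra K L)

theorem mem_of_lie_eq_smul {x y v : L} {c : K} (hc : c ≠ 0) (hx : x ∈ S) (hy : y ∈ S)
    (hxy : ⁅x, y⁆ = c • v) : v ∈ S := by
  have := S.smul_mem c⁻¹ (S.lie_mem hx hy)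
  rwa [hxy, inv_smul_smul₀ hc] at this

theorem eq_top_of_basis_mem {ι : Type*} (b : Module.Basis ι K L) (hS : ∀ i, b i ∈ S) :
    S = ⊤ := by
  rw [← toSubmodule_inj, top_toSubmodule, eq_top_iff, ← b.span_eq, Submodule.span_le]
  rintro _ ⟨i, rfl⟩
  exact hS i

end LieSubalgebra

namespace ExtSV

open SVIdx

variable {g : Type*} [LieRing g] [LieAlgebra ℂ g] (h : ExtSV g) {S : LieSubalgebra ℂ g}

theorem L_natCast_add_two_mem (h1 : h.b (L 1) ∈ S) (h2 : h.b (L 2) ∈ S) (n : ℕ) :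
    h.b (L (n + 2)) ∈ S := by
  induction n with
  | zero => simpa using h2
  | succ n ih =>
    refine S.mem_of_lie_eq_smul (Nat.cast_add_one_ne_zero (R := ℂ) n) h1 ih ?_
    convert h.LL 1 (n + 2) using 4 <;> push_cast <;> ring

theorem L_neg_natCast_sub_two_mem (hm1 : h.b (L (-1)) ∈ S) (hm2 : h.b (L (-2)) ∈ S) (n : ℕ) :
    h.b (L (-(n + 2))) ∈ S := by
  induction n with
  | zero => simpa using hm2
  | succ n ih =>
    refine S.mem_of_lie_eq_smul (neg_ne_zero.mpr (Nat.cast_add_one_ne_zero (R := ℂ) n))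
      hm1 ih ?_
    convert h.LL (-1) (-(n + 2)) using 4 <;> push_cast <;> ring

theorem L_mem (hm2 : h.b (L (-2)) ∈ S) (hm1 : h.b (L (-1)) ∈ S) (h1 : h.b (L 1) ∈ S)
    (h2 : h.b (L 2) ∈ S) (n : ℤ) : h.b (L n) ∈ S := by
  have h0 : h.b (L 0) ∈ S :=
    S.mem_of_lie_eq_smul two_ne_zero hm1 h1 (by simpa [one_add_one_eq_two] using h.LL (-1) 1)
  obtain ⟨k, rfl | rfl⟩ := Int.eq_nat_or_neg n
  · match k with
    | 0 => exact h0
    | 1 => exact h1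
    | k + 2 => simpa using h.L_natCast_add_two_mem h1 h2 k
  · match k with
    | 0 => exact h0
    | 1 => exact hm1
    | k + 2 => simpa using h.L_neg_natCast_sub_two_mem hm1 hm2 k

theorem N_mem (hL : ∀ n, h.b (L n) ∈ S) (hN1 : h.b (N 1) ∈ S) (n : ℤ) : h.b (N n) ∈ S :=
  S.mem_of_lie_eq_smul one_ne_zero (hL (n - 1)) hN1 (by simpa using h.LN (n - 1) 1)

theorem Y_mem (hN : ∀ n, h.b (N n) ∈ S) (hY0 : h.b (Y 0) ∈ S) (n : ℤ) : h.b (Y n) ∈ S := by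
  simpa [h.NY] using S.lie_mem (hN n) hY0

theorem M_mem (hY : ∀ n, h.b (Y n) ∈ S) (n : ℤ) : h.b (M n) ∈ S := by
  rcases eq_or_ne n (-1) with rfl | hn
  · exact S.mem_of_lie_eq_smul two_ne_zero (hY 0) (hY (-2)) (by norm_num [h.YY])
  · have hc : (n : ℂ) + 1 ≠ 0 := by exact_mod_cast (sub_ne_zero.mpr hn : n - -1 ≠ 0)
    refine S.mem_of_lie_eq_smul hc (hY n) (hY (-1)) ?_
    convert h.YY n (-1) using 4 <;> push_cast <;> ring

theorem basis_mem (hm2 : h.b (L (-2)) ∈ S) (hm1 : h.b (L (-1)) ∈ S) (h1 : h.b (L 1) ∈ S)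
    (h2 : h.b (L 2) ∈ S) (hN1 : h.b (N 1) ∈ S) (hY0 : h.b (Y 0) ∈ S) : ∀ i, h.b i ∈ S := by
  have hL := h.L_mem hm2 hm1 h1 h2
  have hY := h.Y_mem (h.N_mem hL hN1) hY0
  rintro (n | n | n | n)
  exacts [hL n, h.M_mem hY n, h.N_mem hL hN1 n, hY n]

end ExtSV

/-- `sv~` is generated as a Lie algebra by `L_{-2}, L_{-1}, L_1, L_2, N_1, Y_{1/2}`. -/
theorem extSV_generated {g : Type*} [LieRing g] [LieAlgebra ℂ g] (h : ExtSV g) :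
    LieSubalgebra.lieSpan ℂ g
      {h.b (SVIdx.L (-2)), h.b (SVIdx.L (-1)), h.b (SVIdx.L 1), h.b (SVIdx.L 2),
        h.b (SVIdx.N 1), h.b (SVIdx.Y 0)} = ⊤ :=
  LieSubalgebra.eq_top_of_basis_mem _ h.b <| h.basis_mem
    (LieSubalgebra.subset_lieSpan (by simp)) (LieSubalgebra.subset_lieSpan (by simp))
    (LieSubalgebra.subset_lieSpan (by simp)) (LieSubalgebra.subset_lieSpan (by simp))
    (LieSubalgebra.subset_lieSpan (by simp)) (LieSubalgebra.subset_lieSpan (by simp))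
end

section
/- The center of the extended Schrödinger-Virasoro Lie algebra sv~ is trivial: if x ∈ sv~ satisfies [x,y]=0 for all y ∈ sv~, then x = 0. -/
/-!
Since `ad L₀` is diagonal on the basis with eigenvalue the degree `n` of `L_n, M_n, N_n` and
`n + 1/2` of `Y_{n+1/2}`, a central element, being killed by `ad L₀`, lies in the span of
`L₀, M₀, N₀`. Writing it as `a L₀ + b M₀ + c N₀`, its brackets with `L₁`, `Y_{1/2}` and `N₁`
are `a L₁`, `(a/2 + c) Y_{1/2}` and `a N₁ - 2b M₁`, which forces `a = c = b = 0`.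
-/

theorem Module.Basis.repr_apply_eq_mul_of_apply_eq_smul {ι R M : Type*} [CommSemiring R]
    [AddCommMonoid M] [Module R M] (b : Module.Basis ι R M) (f : M →ₗ[R] M) (e : ι → R)
    (hf : ∀ i, f (b i) = e i • b i) (x : M) (i : ι) :
    b.repr (f x) i = e i * b.repr x i := by
  classical
  have hmaps : Finsupp.lapply i ∘ₗ b.repr.toLinearMap ∘ₗ f =
      e i • (Finsupp.lapply i ∘ₗ b.repr.toLinearMap) := by
    refine b.ext fun j => ?_
    by_cases hij : j = i
    · subst hij; simp [hf]
    · simp [hf, hij]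
  exact LinearMap.congr_fun hmaps x

noncomputable def SVIdx.degree : SVIdx → ℂ
  | .L n => n
  | .M n => n
  | .N n => n
  | .Y n => n + 1 / 2

theorem SVIdx.mem_of_degree_eq_zero {i : SVIdx} (hi : i.degree = 0) :
    i ∈ ({.L 0, .M 0, .N 0} : Set SVIdx) := by
  cases i with
  | L n => simpa [SVIdx.degree] using hi
  | M n => simpa [SVIdx.degree] using hi
  | N n => simpa [SVIdx.degree] using hi
  | Y n =>
    simp only [SVIdx.degree] at hi
    have h2 : ((2 * n + 1 : ℤ) : ℂ) = 0 := by
      push_cast; linear_combination 2 * hi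
    have : 2 * n + 1 = 0 := by exact_mod_cast h2
    omega

namespace ExtSV

variable {g : Type*} [LieRing g] [LieAlgebra ℂ g] (h : ExtSV g)

theorem lie_L_zero (i : SVIdx) : ⁅h.b (.L 0), h.b i⁆ = i.degree • h.b i := by
  cases i with
  | L n => simp [h.LL, SVIdx.degree]
  | M n => simp [h.LM, SVIdx.degree]
  | N n => simp [h.LN, SVIdx.degree]
  | Y n => simp [h.LY, SVIdx.degree]

theorem exists_eq_of_lie_L_zero_eq_zero {x : g} (hx : ⁅h.b (.L 0), x⁆ = 0) :
    ∃ a b c : ℂ, x = a • h.b (.L 0) + b • h.b (.M 0) + c • h.b (.N 0) := by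
  have hsupp : ↑(h.b.repr x).support ⊆ ({.L 0, .M 0, .N 0} : Set SVIdx) := by
    intro i hi
    have hcoord := h.b.repr_apply_eq_mul_of_apply_eq_smul (LieAlgebra.ad ℂ g (h.b (.L 0)))
      SVIdx.degree h.lie_L_zero x i
    rw [LieAlgebra.ad_apply, hx, map_zero, Finsupp.zero_apply, eq_comm, mul_eq_zero] at hcoord
    exact SVIdx.mem_of_degree_eq_zero (hcoord.resolve_right (Finsupp.mem_support_iff.mp hi))
  obtain ⟨a, y, hy, rfl⟩ := Submodule.mem_span_insert.mp <| by
    simpa [Set.image_insert_eq] using h.b.mem_span_image.mpr hsupp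
  obtain ⟨b, c, rfl⟩ := Submodule.mem_span_pair.mp hy
  exact ⟨a, b, c, by abel⟩

variable (a b c : ℂ)

theorem lie_L_one : ⁅a • h.b (.L 0) + b • h.b (.M 0) + c • h.b (.N 0), h.b (.L 1)⁆ =
    a • h.b (.L 1) := by
  simp [← lie_skew (h.b (.M 0)), ← lie_skew (h.b (.N 0)), h.LL, h.LM, h.LN]

theorem lie_Y_zero : ⁅a • h.b (.L 0) + b • h.b (.M 0) + c • h.b (.N 0), h.b (.Y 0)⁆ =
    (a / 2 + c) • h.b (.Y 0) := by
  simp [h.LY, h.MY, h.NY, add_smul, smul_smul, div_eq_mul_inv]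

theorem lie_N_one : ⁅a • h.b (.L 0) + b • h.b (.M 0) + c • h.b (.N 0), h.b (.N 1)⁆ =
    a • h.b (.N 1) - (2 * b) • h.b (.M 1) := by
  simp [← lie_skew (h.b (.M 0)), h.LN, h.NM, h.NN, smul_smul, mul_comm, sub_eq_add_neg]

end ExtSV

/-- The center of `sv~` is trivial. -/
theorem extSV_center_trivial {g : Type*} [LieRing g] [LieAlgebra ℂ g] (h : ExtSV g) :
    ∀ x : g, (∀ y : g, ⁅x, y⁆ = 0) → x = 0 := by
  intro x hx
  obtain ⟨a, b, c, rfl⟩ := h.exists_eq_of_lie_L_zero_eq_zero <| by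
    rw [← lie_skew, hx, neg_zero]
  have ha : a = 0 := by
    simpa [h.b.ne_zero] using (h.lie_L_one a b c).symm.trans (hx _)
  have hc : c = 0 := by
    simpa [ha, h.b.ne_zero] using (h.lie_Y_zero a b c).symm.trans (hx _)
  have hb : b = 0 := by
    simpa [ha, h.b.ne_zero] using (h.lie_N_one a b c).symm.trans (hx _)
  simp [ha, hb, hc]
end

section
/- Let D be a degree-zero derivation of sv~, i.e., a derivation satisfying D(L_m), D(M_m), D(N_m) ∈ span{L_m, M_m, N_m} and D(Y_{m+1/2}) ∈ ℂ Y_{m+1/2} for all m. Then there exist a, b, c ∈ ℂ such that D(L_m)=maL_m, D(M_m)=(2b−a+ma)M_m, D(N_m)=cM_m+maN_m, D(Y_{m+1/2})=(b+ma)Y_{m+1/2} for all m ∈ ℤ; equivalently D = ad(aL_0 − (c/2)M_0 + (b − a/2)N_0). -/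
lemma LieDerivation.apply_eq_lie_of_basis {ι R L : Type*} [CommRing R] [LieRing L]
    [LieAlgebra R L] (b : Module.Basis ι R L) {D : LieDerivation R L L} {x : L}
    (hD : ∀ i, D (b i) = ⁅x, b i⁆) (y : L) : D y = ⁅x, y⁆ :=
  LinearMap.congr_fun (b.ext (f₁ := (D : L →ₗ[R] L)) (f₂ := LieAlgebra.ad R L x) hD) y

namespace ExtSV

open SVIdx

variable {g : Type*} [LieRing g] [LieAlgebra ℂ g] (h : ExtSV g)

lemma ML (m n : ℤ) : ⁅h.b (M m), h.b (L n)⁆ = (-(m : ℂ)) • h.b (M (m + n)) := by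
  rw [← lie_skew, h.LM n m, add_comm n m, neg_smul]

lemma NL (m n : ℤ) : ⁅h.b (N m), h.b (L n)⁆ = (-(m : ℂ)) • h.b (N (m + n)) := by
  rw [← lie_skew, h.LN n m, add_comm n m, neg_smul]

lemma MN (m n : ℤ) : ⁅h.b (M m), h.b (N n)⁆ = (-2 : ℂ) • h.b (M (m + n)) := by
  rw [← lie_skew, h.NM n m, add_comm n m, neg_smul]

noncomputable def coeff (D : LieDerivation ℂ g g) (i j : SVIdx) : ℂ := h.b.repr (D (h.b i)) j

structure IsDegreeZero (D : LieDerivation ℂ g g) : Prop where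
  exists_L : ∀ m : ℤ, ∃ α β γ : ℂ,
    D (h.b (L m)) = α • h.b (L m) + β • h.b (M m) + γ • h.b (N m)
  exists_M : ∀ m : ℤ, ∃ α β γ : ℂ,
    D (h.b (M m)) = α • h.b (L m) + β • h.b (M m) + γ • h.b (N m)
  exists_N : ∀ m : ℤ, ∃ α β γ : ℂ,
    D (h.b (N m)) = α • h.b (L m) + β • h.b (M m) + γ • h.b (N m)
  exists_Y : ∀ m : ℤ, ∃ c : ℂ, D (h.b (Y m)) = c • h.b (Y m)

variable {h} {D : LieDerivation ℂ g g}

local notation "κ" => h.coeff D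

namespace IsDegreeZero

lemma apply_L (hD : h.IsDegreeZero D) (m : ℤ) : D (h.b (L m)) =
    κ (L m) (L m) • h.b (L m) + κ (L m) (M m) • h.b (M m) + κ (L m) (N m) • h.b (N m) := by
  obtain ⟨α, β, γ, e⟩ := hD.exists_L m
  simp [coeff, e]

lemma apply_M (hD : h.IsDegreeZero D) (m : ℤ) : D (h.b (M m)) =
    κ (M m) (L m) • h.b (L m) + κ (M m) (M m) • h.b (M m) + κ (M m) (N m) • h.b (N m) := by
  obtain ⟨α, β, γ, e⟩ := hD.exists_M m
  simp [coeff, e]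

lemma apply_N (hD : h.IsDegreeZero D) (m : ℤ) : D (h.b (N m)) =
    κ (N m) (L m) • h.b (L m) + κ (N m) (M m) • h.b (M m) + κ (N m) (N m) • h.b (N m) := by
  obtain ⟨α, β, γ, e⟩ := hD.exists_N m
  simp [coeff, e]

lemma apply_Y (hD : h.IsDegreeZero D) (m : ℤ) : D (h.b (Y m)) = κ (Y m) (Y m) • h.b (Y m) := by
  obtain ⟨c, e⟩ := hD.exists_Y m
  simp [coeff, e]

lemma coeff_M_L_mul_add_coeff_M_N (hD : h.IsDegreeZero D) (m n : ℤ) :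
    κ (M m) (L m) * (n + (1 - m) / 2) + κ (M m) (N m) = 0 := by
  have E := D.apply_lie_eq_add (h.b (M m)) (h.b (Y n))
  rw [h.MY, map_zero, hD.apply_M, hD.apply_Y] at E
  have := congrArg (h.b.repr · (Y (m + n))) E
  simpa [h.LY, h.NY, h.MY, mul_add, eq_comm] using this

lemma coeff_M_L (hD : h.IsDegreeZero D) (m : ℤ) : κ (M m) (L m) = 0 := by
  have h₀ := hD.coeff_M_L_mul_add_coeff_M_N m 0
  have h₁ := hD.coeff_M_L_mul_add_coeff_M_N m 1
  push_cast at h₀ h₁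
  linear_combination h₁ - h₀

lemma coeff_M_N (hD : h.IsDegreeZero D) (m : ℤ) : κ (M m) (N m) = 0 := by
  simpa [hD.coeff_M_L] using hD.coeff_M_L_mul_add_coeff_M_N m 0

lemma coeff_N_two_L (hD : h.IsDegreeZero D) : κ (N 2) (L 2) = 0 := by
  have E := D.apply_lie_eq_add (h.b (L 1)) (h.b (N 1))
  rw [h.LN, hD.apply_N, hD.apply_L] at E
  have := congrArg (h.b.repr · (L 2)) E
  simpa [coeff, h.LL, h.LM, h.LN, h.MN, h.NN, Finsupp.single_apply] using this

lemma coeff_N_L (hD : h.IsDegreeZero D) (m : ℤ) : κ (N m) (L m) = 0 := by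
  have E := D.apply_lie_eq_add (h.b (N m)) (h.b (N 2))
  rw [h.NN, map_zero, hD.apply_N, hD.apply_N] at E
  have := congrArg (h.b.repr · (N (m + 2))) E
  simpa [h.LN, h.MN, h.NN, h.NM, hD.coeff_N_two_L, eq_comm] using this

lemma coeff_N_M (hD : h.IsDegreeZero D) (m : ℤ) : κ (N m) (M m) = κ (N 0) (M 0) := by
  have eq_two (k : ℤ) : κ (N k) (M k) = κ (N 2) (M 2) := by
    have E := D.apply_lie_eq_add (h.b (N k)) (h.b (N 2))
    rw [h.NN, map_zero, hD.apply_N, hD.apply_N] at E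
    have := congrArg (h.b.repr · (M (k + 2))) E
    have key : 0 = κ (N 2) (M 2) * 2 - κ (N k) (M k) * 2 := by
      simpa [h.LN, h.MN, h.NN, h.NL, h.NM, ← sub_eq_add_neg] using this
    linear_combination key / 2
  rw [eq_two m, eq_two 0]

lemma coeff_L_M (hD : h.IsDegreeZero D) (m : ℤ) : κ (L m) (M m) = 0 := by
  have E := D.apply_lie_eq_add (h.b (L m)) (h.b (N 0))
  rw [h.LN, hD.apply_N, hD.apply_L] at E
  have := congrArg (h.b.repr · (M m)) E
  simpa [h.LL, h.LM, h.LN, h.MN, h.NN, Finsupp.single_apply] using this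

lemma coeff_Y_add (hD : h.IsDegreeZero D) (m n : ℤ) :
    κ (Y (m + n)) (Y (m + n)) = κ (N m) (N m) + κ (Y n) (Y n) := by
  have E := D.apply_lie_eq_add (h.b (N m)) (h.b (Y n))
  rw [h.NY, hD.apply_N, hD.apply_Y, hD.apply_Y] at E
  have := congrArg (h.b.repr · (Y (m + n))) E
  simpa [h.NY, h.MY, hD.coeff_N_L, add_comm] using this

lemma coeff_L_N_eq_mul_sub (hD : h.IsDegreeZero D) (m n : ℤ) :
    κ (L m) (N m) = ((n : ℂ) + (1 - m) / 2) * (κ (N m) (N m) - κ (L m) (L m)) := by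
  have E := D.apply_lie_eq_add (h.b (L m)) (h.b (Y n))
  rw [h.LY, map_smul, hD.apply_L, hD.apply_Y, hD.apply_Y] at E
  have := congrArg (h.b.repr · (Y (m + n))) E
  have key : ((n : ℂ) + (1 - m) / 2) * κ (Y (m + n)) (Y (m + n)) =
      κ (Y n) (Y n) * ((n : ℂ) + (1 - m) / 2) +
        (κ (L m) (L m) * ((n : ℂ) + (1 - m) / 2) + κ (L m) (N m)) := by
    simpa [h.LY, h.NY, h.MY, mul_add] using this
  linear_combination -key + ((n : ℂ) + (1 - m) / 2) * hD.coeff_Y_add m n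

lemma coeff_N_N (hD : h.IsDegreeZero D) (m : ℤ) : κ (N m) (N m) = κ (L m) (L m) := by
  have h₀ := hD.coeff_L_N_eq_mul_sub m 0
  have h₁ := hD.coeff_L_N_eq_mul_sub m 1
  push_cast at h₀ h₁
  linear_combination h₀ - h₁

lemma coeff_L_N (hD : h.IsDegreeZero D) (m : ℤ) : κ (L m) (N m) = 0 := by
  simpa [hD.coeff_N_N] using hD.coeff_L_N_eq_mul_sub m 0

lemma coeff_Y (hD : h.IsDegreeZero D) (m : ℤ) :
    κ (Y m) (Y m) = κ (L m) (L m) + κ (Y 0) (Y 0) := by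
  simpa [hD.coeff_N_N] using hD.coeff_Y_add m 0

lemma coeff_L_add (hD : h.IsDegreeZero D) (m n : ℤ) :
    κ (L (m + n)) (L (m + n)) = κ (L m) (L m) + κ (L n) (L n) := by
  have := hD.coeff_Y_add m n
  rw [hD.coeff_Y, hD.coeff_Y n, hD.coeff_N_N] at this
  linear_combination this

lemma coeff_L (hD : h.IsDegreeZero D) (m : ℤ) : κ (L m) (L m) = m * κ (L 1) (L 1) := by
  simpa using AddMonoidHom.apply_int (f := .mk' (fun m ↦ κ (L m) (L m)) hD.coeff_L_add) (n := m)

lemma coeff_M (hD : h.IsDegreeZero D) (m : ℤ) :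
    κ (M m) (M m) = κ (L m) (L m) + κ (M 0) (M 0) := by
  have E := D.apply_lie_eq_add (h.b (N m)) (h.b (M 0))
  rw [h.NM, map_smul, hD.apply_N, hD.apply_M, hD.apply_M, add_zero] at E
  have := congrArg (h.b.repr · (M m)) E
  have key : 2 * κ (M m) (M m) = κ (M 0) (M 0) * 2 + κ (N m) (N m) * 2 := by
    simpa [h.LM, h.NM, h.MM, h.NL, h.NN] using this
  linear_combination key / 2 + hD.coeff_N_N m

lemma coeff_M_one (hD : h.IsDegreeZero D) :
    κ (M 1) (M 1) = κ (Y 1) (Y 1) + κ (Y (-1)) (Y (-1)) := by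
  have E := D.apply_lie_eq_add (h.b (Y 1)) (h.b (Y (-1)))
  rw [h.YY, map_smul, hD.apply_Y, hD.apply_Y, show (1 : ℤ) + -1 + 1 = 1 by norm_num,
    hD.apply_M] at E
  have := congrArg (h.b.repr · (M 1)) E
  have key : 2 * κ (M 1) (M 1) = κ (Y (-1)) (Y (-1)) * 2 + κ (Y 1) (Y 1) * 2 := by
    simpa [h.YY, one_add_one_eq_two] using this
  linear_combination key / 2

lemma coeff_M_zero (hD : h.IsDegreeZero D) :
    κ (M 0) (M 0) = 2 * κ (Y 0) (Y 0) - κ (L 1) (L 1) := by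
  have := hD.coeff_M_one
  rw [hD.coeff_M, hD.coeff_Y 1, hD.coeff_Y (-1), hD.coeff_L (-1)] at this
  push_cast at this
  linear_combination this

lemma apply_L_eq_smul (hD : h.IsDegreeZero D) (m : ℤ) :
    D (h.b (L m)) = ((m : ℂ) * κ (L 1) (L 1)) • h.b (L m) := by
  rw [hD.apply_L, hD.coeff_L_M, hD.coeff_L_N, hD.coeff_L, zero_smul, zero_smul, add_zero,
    add_zero]

lemma apply_M_eq_smul (hD : h.IsDegreeZero D) (m : ℤ) : D (h.b (M m)) =
    (2 * κ (Y 0) (Y 0) - κ (L 1) (L 1) + (m : ℂ) * κ (L 1) (L 1)) • h.b (M m) := by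
  rw [hD.apply_M, hD.coeff_M_L, hD.coeff_M_N, hD.coeff_M, hD.coeff_M_zero, hD.coeff_L,
    zero_smul, zero_smul, zero_add, add_zero, add_comm ((m : ℂ) * _)]

lemma apply_N_eq_add (hD : h.IsDegreeZero D) (m : ℤ) : D (h.b (N m)) =
    κ (N 0) (M 0) • h.b (M m) + ((m : ℂ) * κ (L 1) (L 1)) • h.b (N m) := by
  rw [hD.apply_N, hD.coeff_N_L, hD.coeff_N_M, hD.coeff_N_N, hD.coeff_L, zero_smul, zero_add]

lemma apply_Y_eq_smul (hD : h.IsDegreeZero D) (m : ℤ) :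
    D (h.b (Y m)) = (κ (Y 0) (Y 0) + (m : ℂ) * κ (L 1) (L 1)) • h.b (Y m) := by
  rw [hD.apply_Y, hD.coeff_Y, hD.coeff_L, add_comm]

end IsDegreeZero

lemma apply_eq_lie_of_apply_basis (a b c : ℂ)
    (hL : ∀ m : ℤ, D (h.b (L m)) = ((m : ℂ) * a) • h.b (L m))
    (hM : ∀ m : ℤ, D (h.b (M m)) = (2 * b - a + (m : ℂ) * a) • h.b (M m))
    (hN : ∀ m : ℤ, D (h.b (N m)) = c • h.b (M m) + ((m : ℂ) * a) • h.b (N m))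
    (hY : ∀ m : ℤ, D (h.b (Y m)) = (b + (m : ℂ) * a) • h.b (Y m)) (x : g) :
    D x = ⁅a • h.b (L 0) - (c / 2) • h.b (M 0) + (b - a / 2) • h.b (N 0), x⁆ := by
  refine LieDerivation.apply_eq_lie_of_basis h.b (fun i ↦ ?_) x
  cases i with
  | L m =>
    simp only [hL, add_lie, sub_lie, smul_lie, h.LL, h.ML, h.NL, zero_add, smul_smul]
    push_cast
    module
  | M m =>
    simp only [hM, add_lie, sub_lie, smul_lie, h.LM, h.MM, h.NM, zero_add, smul_smul, smul_zero]
    module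
  | N m =>
    simp only [hN, add_lie, sub_lie, smul_lie, h.LN, h.MN, h.NN, zero_add, smul_smul, smul_zero]
    module
  | Y m =>
    simp only [hY, add_lie, sub_lie, smul_lie, h.LY, h.MY, h.NY, zero_add, smul_smul, smul_zero]
    push_cast
    module

end ExtSV

/-- A degree-zero derivation of `sv~` is inner, with the explicit form
`D = ad(a L₀ - (c/2) M₀ + (b - a/2) N₀)`. -/
theorem extSV_degree_zero_derivation {g : Type*} [LieRing g] [LieAlgebra ℂ g] (h : ExtSV g)
    (D : LieDerivation ℂ g g)
    (hL : ∀ m : ℤ, ∃ α β γ : ℂ,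
      D (h.b (SVIdx.L m)) = α • h.b (SVIdx.L m) + β • h.b (SVIdx.M m) + γ • h.b (SVIdx.N m))
    (hM : ∀ m : ℤ, ∃ α β γ : ℂ,
      D (h.b (SVIdx.M m)) = α • h.b (SVIdx.L m) + β • h.b (SVIdx.M m) + γ • h.b (SVIdx.N m))
    (hN : ∀ m : ℤ, ∃ α β γ : ℂ,
      D (h.b (SVIdx.N m)) = α • h.b (SVIdx.L m) + β • h.b (SVIdx.M m) + γ • h.b (SVIdx.N m))
    (hY : ∀ m : ℤ, ∃ c : ℂ, D (h.b (SVIdx.Y m)) = c • h.b (SVIdx.Y m)) :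
    ∃ a b c : ℂ,
      (∀ m : ℤ, D (h.b (SVIdx.L m)) = ((m : ℂ) * a) • h.b (SVIdx.L m)) ∧
      (∀ m : ℤ, D (h.b (SVIdx.M m)) = (2 * b - a + (m : ℂ) * a) • h.b (SVIdx.M m)) ∧
      (∀ m : ℤ, D (h.b (SVIdx.N m)) =
        c • h.b (SVIdx.M m) + ((m : ℂ) * a) • h.b (SVIdx.N m)) ∧
      (∀ m : ℤ, D (h.b (SVIdx.Y m)) = (b + (m : ℂ) * a) • h.b (SVIdx.Y m)) ∧
      (∀ x : g, D x =
        ⁅a • h.b (SVIdx.L 0) - (c / 2) • h.b (SVIdx.M 0) + (b - a / 2) • h.b (SVIdx.N 0), x⁆) := by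
  have hD : h.IsDegreeZero D := ⟨hL, hM, hN, hY⟩
  exact ⟨_, _, _, hD.apply_L_eq_smul, hD.apply_M_eq_smul, hD.apply_N_eq_add, hD.apply_Y_eq_smul,
    ExtSV.apply_eq_lie_of_apply_basis _ _ _ hD.apply_L_eq_smul hD.apply_M_eq_smul
      hD.apply_N_eq_add hD.apply_Y_eq_smul⟩
end

section
/- If φ is a 2-cocycle on sv~, then for all m, n ∈ ℤ with m + n ≠ 0, one has φ(L_m, M_n) = (n/(m+n)) φ(L_0, M_{m+n}). -/
/-! Put `x = L_0` in the cocycle identity: since `ad L_0` acts on `L_m` and `M_n` by the scalars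
`m` and `n`, the identity reads `(m + n) φ(L_m, M_n) = φ(L_0, [L_m, M_n]) = n φ(L_0, M_{m+n})`. -/

section LieCocycle

variable {R g : Type*} [CommRing R] [LieRing g] [LieAlgebra R g] (φ : g →ₗ[R] g →ₗ[R] R)
  (hskew : ∀ x y : g, φ x y = - φ y x)
  (hcoc : ∀ x y z : g, φ ⁅x, y⁆ z + φ ⁅y, z⁆ x + φ ⁅z, x⁆ y = 0)
include hskew hcoc

theorem cocycle_lie_left_add_lie_right (e x y : g) :
    φ ⁅e, x⁆ y + φ x ⁅e, y⁆ = φ e ⁅x, y⁆ := by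
  have h := hcoc e x y
  rw [← lie_skew y e, map_neg, LinearMap.neg_apply, hskew ⁅x, y⁆ e, hskew ⁅e, y⁆ x] at h
  linear_combination h

theorem cocycle_mul_of_lie_eq_smul {e x y : g} {a c : R} (hx : ⁅e, x⁆ = a • x)
    (hy : ⁅e, y⁆ = c • y) : (a + c) * φ x y = φ e ⁅x, y⁆ := by
  rw [← cocycle_lie_left_add_lie_right φ hskew hcoc, hx, hy]
  simp only [map_smul, LinearMap.smul_apply, smul_eq_mul]
  ring

end LieCocycle

/-- For a 2-cocycle `φ` on `sv~`: `φ(L_m, M_n) = (n/(m+n)) φ(L_0, M_{m+n})` when `m+n ≠ 0`. -/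
theorem extSV_cocycle_LM {g : Type*} [LieRing g] [LieAlgebra ℂ g] (h : ExtSV g)
    (φ : g →ₗ[ℂ] g →ₗ[ℂ] ℂ)
    (hskew : ∀ x y : g, φ x y = - φ y x)
    (hcoc : ∀ x y z : g, φ ⁅x, y⁆ z + φ ⁅y, z⁆ x + φ ⁅z, x⁆ y = 0) :
    ∀ m n : ℤ, m + n ≠ 0 →
      φ (h.b (SVIdx.L m)) (h.b (SVIdx.M n)) =
        ((n : ℂ) / ((m : ℂ) + (n : ℂ))) * φ (h.b (SVIdx.L 0)) (h.b (SVIdx.M (m + n))) := by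
  intro m n hmn
  have hmn' : (m : ℂ) + n ≠ 0 := by exact_mod_cast hmn
  have hL : ⁅h.b (SVIdx.L 0), h.b (SVIdx.L m)⁆ = (m : ℂ) • h.b (SVIdx.L m) := by
    simpa using h.LL 0 m
  have hM : ⁅h.b (SVIdx.L 0), h.b (SVIdx.M n)⁆ = (n : ℂ) • h.b (SVIdx.M n) := by
    simpa using h.LM 0 n
  have hweight := cocycle_mul_of_lie_eq_smul φ hskew hcoc hL hM
  rw [h.LM, map_smul, smul_eq_mul] at hweight
  rw [div_mul_eq_mul_div, eq_div_iff hmn', ← hweight]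
  ring
end

section
/- If φ is a 2-cocycle on sv~, then φ(Y_{m+1/2}, Y_{−m−1/2}) = (m + 1/2) φ(N_0, M_0) for all m ∈ ℤ. -/
theorem cocycle_add_mul_apply_of_lie_eq_smul {R L : Type*} [CommRing R] [LieRing L] [Module R L]
    (φ : L →ₗ[R] L →ₗ[R] R) (hskew : ∀ x y : L, φ x y = - φ y x)
    (hcoc : ∀ x y z : L, φ ⁅x, y⁆ z + φ ⁅y, z⁆ x + φ ⁅z, x⁆ y = 0)
    {n y y' z : L} {a a' c : R} (hy : ⁅n, y⁆ = a • y) (hy' : ⁅n, y'⁆ = a' • y')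
    (hyy' : ⁅y, y'⁆ = c • z) :
    (a + a') * φ y y' = c * φ n z := by
  have hy'n : ⁅y', n⁆ = -(a' • y') := by rw [← lie_skew, hy']
  have h := hcoc n y y'
  rw [hy, hyy', hy'n] at h
  simp only [map_smul, map_neg, LinearMap.smul_apply, LinearMap.neg_apply, smul_eq_mul] at h
  linear_combination h + a' * hskew y' y - c * hskew z n

/-- For a 2-cocycle `φ` on `sv~`: `φ(Y_{m+1/2}, Y_{-m-1/2}) = (m + 1/2) φ(N_0, M_0)`. -/
theorem extSV_cocycle_YY {g : Type*} [LieRing g] [LieAlgebra ℂ g] (h : ExtSV g)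
    (φ : g →ₗ[ℂ] g →ₗ[ℂ] ℂ)
    (hskew : ∀ x y : g, φ x y = - φ y x)
    (hcoc : ∀ x y z : g, φ ⁅x, y⁆ z + φ ⁅y, z⁆ x + φ ⁅z, x⁆ y = 0) :
    ∀ m : ℤ, φ (h.b (SVIdx.Y m)) (h.b (SVIdx.Y (-m - 1))) =
      ((m : ℂ) + 1 / 2) * φ (h.b (SVIdx.N 0)) (h.b (SVIdx.M 0)) := by
  intro m
  have hN (k : ℤ) : ⁅h.b (SVIdx.N 0), h.b (SVIdx.Y k)⁆ = (1 : ℂ) • h.b (SVIdx.Y k) := by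
    rw [h.NY, zero_add, one_smul]
  have hYY : ⁅h.b (SVIdx.Y m), h.b (SVIdx.Y (-m - 1))⁆ = (2 * (m : ℂ) + 1) • h.b (SVIdx.M 0) := by
    rw [h.YY, show m + (-m - 1) + 1 = 0 by ring]
    push_cast
    ring_nf
  have key := cocycle_add_mul_apply_of_lie_eq_smul φ hskew hcoc (hN m) (hN (-m - 1)) hYY
  linear_combination key / 2
end

section
/- If φ is a 2-cocycle on sv~, then φ(M_p, M_q) = 0 for all p, q ∈ ℤ. -/
theorem cocycle_mul_eq_zero_of_lie_eq_smul {R L : Type*} [CommRing R] [LieRing L] [LieAlgebra R L]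
    (φ : L →ₗ[R] L →ₗ[R] R) (hskew : ∀ x y : L, φ x y = -φ y x)
    (hcoc : ∀ x y z : L, φ ⁅x, y⁆ z + φ ⁅y, z⁆ x + φ ⁅z, x⁆ y = 0)
    {x a b : L} {α β : R} (ha : ⁅x, a⁆ = α • a) (hb : ⁅x, b⁆ = β • b) (hab : ⁅a, b⁆ = 0) :
    (α + β) * φ a b = 0 := by
  have key := hcoc x a b
  rw [ha, hab, ← lie_skew, hb] at key
  simp only [map_zero, map_neg, map_smul, LinearMap.zero_apply, LinearMap.neg_apply,
    LinearMap.smul_apply, smul_eq_mul] at key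
  linear_combination key + β * hskew b a

/-- For a 2-cocycle `φ` on `sv~`: `φ(M_p, M_q) = 0` for all `p, q`. -/
theorem extSV_cocycle_MM {g : Type*} [LieRing g] [LieAlgebra ℂ g] (h : ExtSV g)
    (φ : g →ₗ[ℂ] g →ₗ[ℂ] ℂ)
    (hskew : ∀ x y : g, φ x y = - φ y x)
    (hcoc : ∀ x y z : g, φ ⁅x, y⁆ z + φ ⁅y, z⁆ x + φ ⁅z, x⁆ y = 0) :
    ∀ p q : ℤ, φ (h.b (SVIdx.M p)) (h.b (SVIdx.M q)) = 0 := by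
  intro p q
  have hN₀ : ∀ n, ⁅h.b (SVIdx.N 0), h.b (SVIdx.M n)⁆ = (2 : ℂ) • h.b (SVIdx.M n) := fun n => by
    simpa using h.NM 0 n
  have h4 := cocycle_mul_eq_zero_of_lie_eq_smul φ hskew hcoc (hN₀ p) (hN₀ q) (h.MM p q)
  exact (mul_eq_zero.mp h4).resolve_left (by norm_num)
end

section
/- If φ is a 2-cocycle on sv~, then φ(M_{−p}, N_p) = 2 φ(L_1, M_{−1}) for all p ∈ ℤ. -/
/-!
The element `N_0` acts on every `M_n` by the scalar `2` and commutes with `N_p` and `L_1`.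
For commuting `x, y` the cocycle identity reads `φ([y, z], x) = φ([x, z], y)`; with
`(x, y, z) = (N_p, N_0, M_{-p})` this shows that `φ(M_{-p}, N_p)` does not depend on `p`, and with
`(x, y, z) = (N_0, L_1, M_{-1})` it identifies `φ(M_0, N_0)` with `2 φ(L_1, M_{-1})`.
-/

theorem cocycle_lie_apply_comm_of_lie_eq_zero {R L : Type*} [CommRing R] [LieRing L]
    [LieAlgebra R L] (φ : L →ₗ[R] L →ₗ[R] R)
    (hcoc : ∀ x y z : L, φ ⁅x, y⁆ z + φ ⁅y, z⁆ x + φ ⁅z, x⁆ y = 0)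
    {x y : L} (hxy : ⁅x, y⁆ = 0) (z : L) :
    φ ⁅y, z⁆ x = φ ⁅x, z⁆ y := by
  have hxyz := hcoc x y z
  rw [hxy, ← lie_skew z x] at hxyz
  simp only [map_zero, LinearMap.zero_apply, map_neg, LinearMap.neg_apply, zero_add] at hxyz
  linear_combination hxyz

namespace ExtSV

variable {g : Type*} [LieRing g] [LieAlgebra ℂ g] (h : ExtSV g)

theorem lie_N_zero_M (n : ℤ) :
    ⁅h.b (SVIdx.N 0), h.b (SVIdx.M n)⁆ = (2 : ℂ) • h.b (SVIdx.M n) := by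
  rw [h.NM, zero_add]

theorem lie_N_M_neg (p : ℤ) :
    ⁅h.b (SVIdx.N p), h.b (SVIdx.M (-p))⁆ = (2 : ℂ) • h.b (SVIdx.M 0) := by
  rw [h.NM, add_neg_cancel]

theorem lie_N_zero_L (m : ℤ) : ⁅h.b (SVIdx.N 0), h.b (SVIdx.L m)⁆ = 0 := by
  rw [← lie_skew, h.LN, Int.cast_zero, zero_smul, neg_zero]

theorem lie_L_one_M_neg_one : ⁅h.b (SVIdx.L 1), h.b (SVIdx.M (-1))⁆ = -h.b (SVIdx.M 0) := by
  rw [h.LM]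
  norm_num

variable (φ : g →ₗ[ℂ] g →ₗ[ℂ] ℂ)

theorem cocycle_M_neg_N_eq
    (hcoc : ∀ x y z : g, φ ⁅x, y⁆ z + φ ⁅y, z⁆ x + φ ⁅z, x⁆ y = 0) (p : ℤ) :
    φ (h.b (SVIdx.M (-p))) (h.b (SVIdx.N p)) = φ (h.b (SVIdx.M 0)) (h.b (SVIdx.N 0)) := by
  have key := cocycle_lie_apply_comm_of_lie_eq_zero φ hcoc (h.NN p 0) (h.b (SVIdx.M (-p)))
  rw [h.lie_N_zero_M, h.lie_N_M_neg] at key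
  simp only [map_smul, LinearMap.smul_apply, smul_eq_mul] at key
  exact mul_left_cancel₀ two_ne_zero key

theorem cocycle_M_zero_N_zero_eq
    (hcoc : ∀ x y z : g, φ ⁅x, y⁆ z + φ ⁅y, z⁆ x + φ ⁅z, x⁆ y = 0)
    (hskew : ∀ x y : g, φ x y = - φ y x) :
    φ (h.b (SVIdx.M 0)) (h.b (SVIdx.N 0)) = 2 * φ (h.b (SVIdx.L 1)) (h.b (SVIdx.M (-1))) := by
  have key := cocycle_lie_apply_comm_of_lie_eq_zero φ hcoc (h.lie_N_zero_L 1)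
    (h.b (SVIdx.M (-1)))
  rw [h.lie_L_one_M_neg_one, h.lie_N_zero_M] at key
  simp only [map_neg, map_smul, LinearMap.neg_apply, LinearMap.smul_apply, smul_eq_mul] at key
  linear_combination -key - 2 * hskew (h.b (SVIdx.M (-1))) (h.b (SVIdx.L 1))

end ExtSV

/-- For a 2-cocycle `φ` on `sv~`: `φ(M_{-p}, N_p) = 2 φ(L_1, M_{-1})` for all `p`. -/
theorem extSV_cocycle_MN {g : Type*} [LieRing g] [LieAlgebra ℂ g] (h : ExtSV g)
    (φ : g →ₗ[ℂ] g →ₗ[ℂ] ℂ)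
    (hskew : ∀ x y : g, φ x y = - φ y x)
    (hcoc : ∀ x y z : g, φ ⁅x, y⁆ z + φ ⁅y, z⁆ x + φ ⁅z, x⁆ y = 0) :
    ∀ p : ℤ, φ (h.b (SVIdx.M (-p))) (h.b (SVIdx.N p)) =
      2 * φ (h.b (SVIdx.L 1)) (h.b (SVIdx.M (-1))) := fun p =>
  (h.cocycle_M_neg_N_eq φ hcoc p).trans (h.cocycle_M_zero_N_zero_eq φ hcoc hskew)
end

section
/- Suppose c: ℤ → ℂ satisfies c(0)=c(1)=0 and (n−m)c(m+n)+(m+n)c(m)=(m+n)c(n) for all m,n ∈ ℤ. Then there exists β ∈ ℂ such that c(m) = β(m² − m) for all m ∈ ℤ. -/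
/-! The equation is linear in `c` and is solved by `m ↦ m² - m`, so subtracting `β (m² - m)` with
`β = c(2)/2` reduces the claim to uniqueness: a solution vanishing at `-1, 0, 1, 2` is zero. Taking
`n = 1` gives the two-term recursion `(1 - m) c(m + 1) = -(m + 1) c(m)`, which propagates the zero
upwards from `2` (where `1 - m ≠ 0`) and downwards from `-1` (where `m + 1 ≠ 0`). -/

def IsLNCocycle {K : Type*} [CommRing K] (c : ℤ → K) : Prop :=
  ∀ m n : ℤ, ((n : K) - m) * c (m + n) + ((m : K) + n) * c m = ((m : K) + n) * c n

namespace IsLNCocycle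

variable {K : Type*} [CommRing K]

theorem sq_sub_self : IsLNCocycle fun m : ℤ => ((m : K) ^ 2 - m) := by
  intro m n
  push_cast
  ring

theorem sub_smul {c d : ℤ → K} (hc : IsLNCocycle c) (hd : IsLNCocycle d) (β : K) :
    IsLNCocycle fun m => c m - β * d m := by
  intro m n
  linear_combination hc m n - β * hd m n

theorem recursion {c : ℤ → K} (hc : IsLNCocycle c) (h1 : c 1 = 0) (m : ℤ) :
    (1 - (m : K)) * c (m + 1) = -((m : K) + 1) * c m := by
  linear_combination hc m 1 + ((m : K) + 1) * h1

variable [IsDomain K] [CharZero K]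

theorem eq_zero_of_ge_two {c : ℤ → K} (hc : IsLNCocycle c) (h1 : c 1 = 0) (h2 : c 2 = 0)
    {m : ℤ} (hm : 2 ≤ m) : c m = 0 := by
  induction m, hm using Int.leInduction with
  | base => exact h2
  | succ m hm ih =>
    have hne : 1 - (m : K) ≠ 0 := sub_ne_zero.mpr (by exact_mod_cast (by omega : (1 : ℤ) ≠ m))
    simpa [ih, hne] using hc.recursion h1 m

theorem eq_zero_of_le_neg_one {c : ℤ → K} (hc : IsLNCocycle c) (h1 : c 1 = 0) (hn1 : c (-1) = 0)
    {m : ℤ} (hm : m ≤ -1) : c m = 0 := by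
  induction m, hm using Int.leInductionDown with
  | base => exact hn1
  | pred m hm ih =>
    have hne : (m : K) ≠ 0 := by exact_mod_cast (by omega : m ≠ 0)
    simpa [ih, hne] using hc.recursion h1 (m - 1)

theorem eq_zero {c : ℤ → K} (hc : IsLNCocycle c) (h0 : c 0 = 0) (h1 : c 1 = 0) (h2 : c 2 = 0) :
    c = 0 := by
  have hn1 : c (-1) = 0 := by
    have h := hc (-1) 2
    norm_num [h1, h2] at h
    exact h
  funext m
  rcases le_or_gt 2 m with hm | hm
  · exact hc.eq_zero_of_ge_two h1 h2 hm
  rcases le_or_gt m (-1) with hm' | hm'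
  · exact hc.eq_zero_of_le_neg_one h1 hn1 hm'
  obtain rfl | rfl : m = 0 ∨ m = 1 := by omega
  exacts [h0, h1]

end IsLNCocycle

/-- The functional equation for the cocycle values `c(m) = φ(L_m, N_{-m})` forces
`c(m) = β (m² - m)` for some `β ∈ ℂ`. -/
theorem cocycle_LN_functional_equation (c : ℤ → ℂ) (h0 : c 0 = 0) (h1 : c 1 = 0)
    (heq : ∀ m n : ℤ, ((n : ℂ) - m) * c (m + n) + ((m : ℂ) + n) * c m = ((m : ℂ) + n) * c n) :
    ∃ β : ℂ, ∀ m : ℤ, c m = β * ((m : ℂ) ^ 2 - m) := by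
  refine ⟨c 2 / 2, fun m => ?_⟩
  have hd := (IsLNCocycle.sub_smul heq IsLNCocycle.sq_sub_self (c 2 / 2)).eq_zero
    (by simp [h0]) (by simp [h1]) (by norm_num)
  exact sub_eq_zero.mp (congrFun hd m)
end

section
/- The second cohomology group H²(sv~, ℂ) of the extended Schrödinger-Virasoro algebra has dimension 3, spanned by the classes of the cocycles φ₁(L_m,L_n)=δ_{m+n,0}(m³−m)/12, φ₂(L_m,N_n)=δ_{m+n,0}(m²−m), φ₃(N_m,N_n)=δ_{m+n,0}n (all other pairs of basis vectors mapped to 0). -/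
variable (g : Type*) [LieRing g] [LieAlgebra ℂ g]

/-- The space of 2-cocycles on a complex Lie algebra `g`. -/
noncomputable def twoCocycles : Submodule ℂ (g →ₗ[ℂ] g →ₗ[ℂ] ℂ) where
  carrier := {φ | (∀ x y : g, φ x y = - φ y x) ∧
    (∀ x y z : g, φ ⁅x, y⁆ z + φ ⁅y, z⁆ x + φ ⁅z, x⁆ y = 0)}
  add_mem' := by
    rintro φ ψ ⟨h1, h2⟩ ⟨k1, k2⟩
    refine ⟨fun x y => ?_, fun x y z => ?_⟩
    · simp only [LinearMap.add_apply]
      rw [h1 x y, k1 x y]; ring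
    · simp only [LinearMap.add_apply]
      linear_combination h2 x y z + k2 x y z
  zero_mem' := by
    refine ⟨fun x y => ?_, fun x y z => ?_⟩ <;> simp
  smul_mem' := by
    rintro c φ ⟨h1, h2⟩
    refine ⟨fun x y => ?_, fun x y z => ?_⟩
    · simp only [LinearMap.smul_apply, smul_eq_mul]
      rw [h1 x y]; ring
    · simp only [LinearMap.smul_apply, smul_eq_mul]
      linear_combination c * h2 x y z

/-- The space of 2-coboundaries on a complex Lie algebra `g`. -/
noncomputable def twoCoboundaries : Submodule ℂ (g →ₗ[ℂ] g →ₗ[ℂ] ℂ) where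
  carrier := {φ | ∃ f : g →ₗ[ℂ] ℂ, ∀ x y : g, φ x y = f ⁅x, y⁆}
  add_mem' := by
    rintro φ ψ ⟨f, hf⟩ ⟨f', hf'⟩
    exact ⟨f + f', fun x y => by simp [hf x y, hf' x y]⟩
  zero_mem' := ⟨0, fun x y => by simp⟩
  smul_mem' := by
    rintro c φ ⟨f, hf⟩
    exact ⟨c • f, fun x y => by simp [hf x y]⟩

/-- Structure constants of the cocycle `φ₁(L_m, L_n) = δ_{m+n,0} (m³-m)/12`. -/
noncomputable def c1 : SVIdx → SVIdx → ℂ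
  | SVIdx.L m, SVIdx.L n => if m + n = 0 then ((m : ℂ) ^ 3 - m) / 12 else 0
  | _, _ => 0

/-- Structure constants of the cocycle `φ₂(L_m, N_n) = δ_{m+n,0} (m²-m)`,
extended by skew-symmetry. -/
noncomputable def c2 : SVIdx → SVIdx → ℂ
  | SVIdx.L m, SVIdx.N n => if m + n = 0 then (m : ℂ) ^ 2 - m else 0
  | SVIdx.N n, SVIdx.L m => if m + n = 0 then -((m : ℂ) ^ 2 - m) else 0
  | _, _ => 0

/-- Structure constants of the cocycle `φ₃(N_m, N_n) = δ_{m+n,0} n`. -/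
noncomputable def c3 : SVIdx → SVIdx → ℂ
  | SVIdx.N m, SVIdx.N n => if m + n = 0 then (n : ℂ) else 0
  | _, _ => 0

variable {g}

/-- The bilinear form on `g` obtained by extending structure constants
`c : SVIdx → SVIdx → ℂ` along the basis of `sv~`. -/
noncomputable def ExtSV.mkForm (h : ExtSV g) (c : SVIdx → SVIdx → ℂ) : g →ₗ[ℂ] g →ₗ[ℂ] ℂ :=
  h.b.constr ℂ fun i => h.b.constr ℂ fun j => c i j

/-!
A bilinear form is determined by its matrix `d i j` on the basis `L, M, N, Y`, and it is a
2-cocycle iff `d` is skew and satisfies the Jacobi identity on basis triples, read through the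
structure constants. As `L 0` acts diagonally by the degree, the Jacobi identity with `L 0` gives
`deg [b i, b j] * d i j = d (L 0, [b i, b j])`, so away from total degree `0` the cocycle is the
coboundary of `k ↦ d (L 0) k / deg k`. In degree `0` the remaining Jacobi identities are
recurrences in `m` that express `d (L m, L (-m))`, `d (L m, N (-m))`, `d (N m, N (-m))`, ... through
finitely many values; after a coboundary correction in degree `0`, exactly the three parameters
of `c1, c2, c3` survive. They are independent because on these pairs a coboundary is linear in `m`.
-/

lemma eq_of_recurrence {K : Type*} [Field K] [CharZero K] {u v : ℤ → K} (p : ℤ → K)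
    (h₂ : u 2 = v 2) (hrec : ∀ m ≥ 2, (1 - m) * (u (m + 1) - v (m + 1)) = p m * (u m - v m)) :
    ∀ m ≥ 2, u m = v m := by
  intro m hm
  induction m, hm using Int.leInduction with
  | base => exact h₂
  | succ m hm ih =>
    have hm' : (1 - m : K) ≠ 0 := sub_ne_zero.mpr (by exact_mod_cast (by omega : (1 : ℤ) ≠ m))
    have := hrec m hm
    rw [ih, sub_self, mul_zero, mul_eq_zero] at this
    exact sub_eq_zero.mp (this.resolve_left hm')

lemma twoCoboundaries_le_twoCocycles : twoCoboundaries g ≤ twoCocycles g := by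
  rintro φ ⟨f, hf⟩
  refine ⟨fun x y => by rw [hf, hf, ← lie_skew, map_neg], fun x y z => ?_⟩
  have := congrArg f (lie_jacobi z x y)
  rw [map_add, map_add, map_zero] at this
  rw [hf, hf, hf, ← lie_skew ⁅x, y⁆, ← lie_skew ⁅y, z⁆, ← lie_skew ⁅z, x⁆, map_neg, map_neg,
    map_neg]
  linear_combination -this

noncomputable def jacobiator (φ : g →ₗ[ℂ] g →ₗ[ℂ] ℂ) : g →ₗ[ℂ] g →ₗ[ℂ] g →ₗ[ℂ] ℂ where
  toFun x :=
    { toFun y :=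
        { toFun z := φ ⁅x, y⁆ z + φ ⁅y, z⁆ x + φ ⁅z, x⁆ y
          map_add' _ _ := by simp only [lie_add, add_lie, map_add, LinearMap.add_apply]; ring
          map_smul' _ _ := by simp; ring }
      map_add' _ _ := by ext; simp [add_lie, lie_add]; ring
      map_smul' _ _ := by ext; simp; ring }
  map_add' _ _ := by ext; simp [add_lie, lie_add]; ring
  map_smul' _ _ := by ext; simp; ring

namespace SVIdx

noncomputable def lieCoeff : SVIdx → SVIdx → ℂ
  | L m, L n => n - m
  | L _, M n => n
  | L _, N n => n
  | L m, Y n => n + (1 - m) / 2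
  | M n, L _ => -n
  | M _, M _ => 0
  | M _, N _ => -2
  | M _, Y _ => 0
  | N n, L _ => -n
  | N _, M _ => 2
  | N _, N _ => 0
  | N _, Y _ => 1
  | Y n, L m => -(n + (1 - m) / 2)
  | Y _, M _ => 0
  | Y _, N _ => -1
  | Y m, Y n => m - n

/-- Where the bracket vanishes, `lieIdx` is still chosen so that `degree` is additive. -/
def lieIdx : SVIdx → SVIdx → SVIdx
  | L m, L n => L (m + n)
  | L m, M n | M m, L n | M m, M n | M m, N n | N m, M n => M (m + n)
  | L m, N n | N m, L n | N m, N n => N (m + n)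
  | L m, Y n | M m, Y n | N m, Y n => Y (m + n)
  | Y m, L n | Y m, M n | Y m, N n => Y (m + n)
  | Y m, Y n => M (m + n + 1)

noncomputable def degree_s11 : SVIdx → ℂ
  | L m | M m | N m => m
  | Y m => m + 1 / 2

lemma degree_lieIdx (i j : SVIdx) : degree_s11 (lieIdx i j) = degree_s11 i + degree_s11 j := by
  cases i <;> cases j <;> simp only [lieIdx, degree_s11] <;> push_cast <;> ring

@[simp] lemma lieIdx_L_zero_left (i : SVIdx) : lieIdx (L 0) i = i := by
  cases i <;> simp [lieIdx]

@[simp] lemma lieIdx_L_zero_right (i : SVIdx) : lieIdx i (L 0) = i := by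
  cases i <;> simp [lieIdx]

@[simp] lemma lieCoeff_L_zero_left (i : SVIdx) : lieCoeff (L 0) i = degree_s11 i := by
  cases i <;> simp [lieCoeff, degree_s11]

@[simp] lemma lieCoeff_L_zero_right (i : SVIdx) : lieCoeff i (L 0) = -degree_s11 i := by
  cases i <;> simp [lieCoeff, degree_s11]

structure IsCocycle (d : SVIdx → SVIdx → ℂ) : Prop where
  skew : ∀ i j, d i j = -d j i
  jacobi : ∀ i j k, lieCoeff i j * d (lieIdx i j) k + lieCoeff j k * d (lieIdx j k) i
    + lieCoeff k i * d (lieIdx k i) j = 0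

lemma isCocycle_c1_c2_c3 : IsCocycle c1 ∧ IsCocycle c2 ∧ IsCocycle c3 := by
  refine ⟨⟨?_, ?_⟩, ⟨?_, ?_⟩, ⟨?_, ?_⟩⟩
  all_goals first
    | rintro (m|m|m|m) (n|n|n|n) (k|k|k|k)
      <;> simp only [c1, c2, c3, lieCoeff, lieIdx, mul_zero, add_zero, zero_add]
      <;> split_ifs
      <;> first | ring1 | omega | (obtain rfl : k = -m - n := (by omega); push_cast; ring)
    | rintro (m|m|m|m) (n|n|n|n)
      <;> simp only [c1, c2, c3, neg_zero]
      <;> split_ifs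
      <;> first | ring1 | omega | (obtain rfl : n = -m := (by omega); push_cast; ring)

noncomputable def coboundary (f : SVIdx → ℂ) (i j : SVIdx) : ℂ :=
  lieCoeff i j * f (lieIdx i j)

/-- Away from degree `0` the values are forced by `IsCocycle.degree_lieIdx_mul`; the three
degree-`0` values make `d - coboundary (potential d)` vanish at `(L 1, L (-1))`, `(N 0, M 0)` and
`(L 1, N (-1))`. -/
noncomputable def potential (d : SVIdx → SVIdx → ℂ) : SVIdx → ℂ
  | L m => if m = 0 then -d (L 1) (L (-1)) / 2 else d (L 0) (L m) / m
  | M m => if m = 0 then d (N 0) (M 0) / 2 else d (L 0) (M m) / m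
  | N m => if m = 0 then -d (L 1) (N (-1)) else d (L 0) (N m) / m
  | Y m => d (L 0) (Y m) / (m + 1 / 2)

lemma potential_of_degree_ne_zero (d : SVIdx → SVIdx → ℂ) {k : SVIdx} (hk : degree_s11 k ≠ 0) :
    potential d k = d (L 0) k / degree_s11 k := by
  cases k <;> simp_all [potential, degree_s11]

lemma degree_Y_ne_zero (m : ℤ) : degree_s11 (Y m) ≠ 0 := by
  intro h
  have : ((2 * m + 1 : ℤ) : ℂ) = 0 := by
    rw [degree_s11] at h
    push_cast
    linear_combination 2 * h
  exact absurd (Int.cast_eq_zero.mp this) (by omega)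

lemma c_eq_zero_of_degree_ne_zero {i j : SVIdx} (h : degree_s11 (lieIdx i j) ≠ 0) :
    c1 i j = 0 ∧ c2 i j = 0 ∧ c3 i j = 0 := by
  cases i <;> cases j <;> simp_all [c1, c2, c3, lieIdx, degree_s11] <;>
    norm_cast at h <;> intro <;> omega

end SVIdx

namespace SVIdx.IsCocycle

variable {d : SVIdx → SVIdx → ℂ} (hd : IsCocycle d)
include hd

lemma degree_lieIdx_mul (i j : SVIdx) :
    degree_s11 (lieIdx i j) * d i j = lieCoeff i j * d (L 0) (lieIdx i j) := by
  have := hd.jacobi (L 0) i j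
  simp only [lieIdx_L_zero_left, lieIdx_L_zero_right, lieCoeff_L_zero_left,
    lieCoeff_L_zero_right] at this
  rw [degree_lieIdx]
  linear_combination this - lieCoeff i j * hd.skew (lieIdx i j) (L 0) + degree_s11 j * hd.skew i j

lemma apply_N_M (m : ℤ) : d (N m) (M (-m)) = d (N 0) (M 0) := by
  have := hd.jacobi (N m) (N 0) (M (-m))
  simp only [lieCoeff, lieIdx, add_zero, zero_add, neg_add_cancel] at this
  linear_combination -this / 2 + hd.skew (M (-m)) (N m) - hd.skew (M 0) (N 0)

lemma apply_L_M (m : ℤ) : d (L m) (M (-m)) = -m * d (N 0) (M 0) / 2 := by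
  have := hd.jacobi (L m) (N 0) (M (-m))
  simp only [lieCoeff, lieIdx, add_zero, zero_add, neg_add_cancel, Int.cast_neg,
    Int.cast_zero] at this
  linear_combination -this / 2 + hd.skew (M (-m)) (L m) + m / 2 * hd.skew (M 0) (N 0)

lemma apply_N_N (m : ℤ) : d (N m) (N (-m)) = m * d (N 1) (N (-1)) := by
  have := hd.jacobi (L (m - 1)) (N 1) (N (-m))
  simp only [lieCoeff, lieIdx, sub_add_cancel, show -m + (m - 1) = -1 by ring] at this
  push_cast at this
  linear_combination this - m * hd.skew (N (-1)) (N 1)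

lemma apply_M_M (m : ℤ) : d (M m) (M (-m)) = 0 := by
  have h₁ : d (M 1) (M (-1)) = 0 := by
    have := hd.jacobi (Y 1) (Y (-1)) (M (-1))
    norm_num [lieCoeff, lieIdx] at this
    linear_combination this
  have := hd.jacobi (L (m - 1)) (M 1) (M (-m))
  simp only [lieCoeff, lieIdx, sub_add_cancel, show -m + (m - 1) = -1 by ring] at this
  push_cast at this
  linear_combination this - m * hd.skew (M (-1)) (M 1) + m * h₁

lemma apply_Y_Y (m : ℤ) : d (Y m) (Y (-1 - m)) = (2 * m + 1) * d (N 0) (M 0) / 2 := by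
  have := hd.jacobi (N 0) (Y m) (Y (-1 - m))
  simp only [lieCoeff, lieIdx, zero_add, add_zero, show m + (-1 - m) + 1 = 0 by ring] at this
  push_cast at this
  linear_combination (this + hd.skew (Y (-1 - m)) (Y m)) / 2
    - (2 * m + 1) / 2 * hd.skew (M 0) (N 0)

lemma apply_L_L (m : ℤ) : d (L m) (L (-m)) =
    d (L 1) (L (-1)) * m + (d (L 2) (L (-2)) - 2 * d (L 1) (L (-1))) * (m ^ 3 - m) / 6 := by
  set P : ℤ → ℂ := fun m =>
    d (L 1) (L (-1)) * m + (d (L 2) (L (-2)) - 2 * d (L 1) (L (-1))) * (m ^ 3 - m) / 6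
  have hpos : ∀ m ≥ 2, d (L m) (L (-m)) = P m := by
    refine eq_of_recurrence (fun m => -(m + 2)) (by simp [P]; ring) fun m _ => ?_
    have := hd.jacobi (L m) (L 1) (L (-(m + 1)))
    simp only [lieCoeff, lieIdx, show 1 + -(m + 1) = -m by ring,
      show -(m + 1) + m = -1 by ring] at this
    push_cast at this
    simp only [P]
    push_cast
    linear_combination this + (m + 2) * hd.skew (L (-m)) (L m)
      - (2 * m + 1) * hd.skew (L (-1)) (L 1)
  have hnonneg : ∀ m ≥ 0, d (L m) (L (-m)) = P m := by
    intro m hm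
    obtain rfl | rfl | hm := (by omega : m = 0 ∨ m = 1 ∨ 2 ≤ m)
    · simp only [P, neg_zero, Int.cast_zero]
      linear_combination hd.skew (L 0) (L 0) / 2
    · simp [P]
    · exact hpos m hm
  rcases le_or_gt 0 m with hm | hm
  · exact hnonneg m hm
  · have := hnonneg (-m) (by omega)
    simp only [P, neg_neg] at this ⊢
    push_cast at this
    linear_combination hd.skew (L m) (L (-m)) - this

lemma apply_L_N (m : ℤ) : d (L m) (N (-m)) =
    d (L 1) (N (-1)) * m + (d (L 2) (N (-2)) - 2 * d (L 1) (N (-1))) * (m ^ 2 - m) / 2 := by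
  set P : ℤ → ℂ := fun m =>
    d (L 1) (N (-1)) * m + (d (L 2) (N (-2)) - 2 * d (L 1) (N (-1))) * (m ^ 2 - m) / 2
  have hrec : ∀ m n : ℤ, (n - m) * d (L (m + n)) (N (-(m + n))) + (m + n) * d (L m) (N (-m))
      - (m + n) * d (L n) (N (-n)) = 0 := fun m n => by
    have := hd.jacobi (L m) (L n) (N (-(m + n)))
    simp only [lieCoeff, lieIdx, show n + -(m + n) = -m by ring,
      show -(m + n) + m = -n by ring] at this
    push_cast at this ⊢
    linear_combination
      this + (m + n) * hd.skew (N (-m)) (L m) - (m + n) * hd.skew (N (-n)) (L n)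
  have hpos : ∀ m ≥ 2, d (L m) (N (-m)) = P m := by
    refine eq_of_recurrence (fun m => -(m + 1)) (by simp [P]; ring) fun m _ => ?_
    simp only [P]
    push_cast
    linear_combination hrec m 1
  have hnonneg : ∀ m ≥ 1, d (L m) (N (-m)) = P m := by
    intro m hm
    obtain rfl | hm := (by omega : m = 1 ∨ 2 ≤ m)
    · simp [P]
    · exact hpos m hm
  rcases le_or_gt 1 m with hm | hm
  · exact hnonneg m hm
  · have := hnonneg (1 - m) (by omega)
    have h := hrec m (1 - m)
    simp only [P, add_sub_cancel] at this h ⊢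
    push_cast at this h ⊢
    linear_combination h + this

lemma eq_coboundary_of_degree_ne_zero {i j : SVIdx} (h : degree_s11 (lieIdx i j) ≠ 0) :
    d i j = coboundary (potential d) i j := by
  rw [coboundary, potential_of_degree_ne_zero d h, mul_div_assoc', eq_div_iff h,
    mul_comm, hd.degree_lieIdx_mul]

lemma eq_c_add_coboundary_of_degree_eq_zero {i j : SVIdx} (h : degree_s11 (lieIdx i j) = 0) :
    d i j = 2 * (d (L 2) (L (-2)) - 2 * d (L 1) (L (-1))) * c1 i j
      + (d (L 2) (N (-2)) - 2 * d (L 1) (N (-1))) / 2 * c2 i j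
      - d (N 1) (N (-1)) * c3 i j + coboundary (potential d) i j := by
  cases i <;> cases j <;> simp only [lieIdx] at h
  case L.Y | M.Y | N.Y | Y.L | Y.M | Y.N => exact absurd h (degree_Y_ne_zero _)
  all_goals simp only [degree_s11, Int.cast_eq_zero] at h
  case' L.L m n | L.M m n | L.N m n | M.M m n | N.M m n | N.N m n =>
    obtain rfl : n = -m := by omega
  case' M.L m n | M.N m n | N.L m n => obtain rfl : m = -n := by omega
  case' Y.Y m n => obtain rfl : n = -1 - m := by omega
  all_goals
    simp only [c1, c2, c3, coboundary, lieCoeff, lieIdx, potential, add_neg_cancel,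
      neg_add_cancel, show ∀ m : ℤ, m + (-1 - m) + 1 = 0 from fun m => by ring, if_true]
    push_cast
  case L.L => linear_combination hd.apply_L_L m
  case L.M => linear_combination hd.apply_L_M m
  case L.N => linear_combination hd.apply_L_N m
  case M.L => linear_combination hd.skew (M (-n)) (L n) - hd.apply_L_M n
  case M.M => linear_combination hd.apply_M_M m
  case M.N => linear_combination hd.skew (M (-n)) (N n) - hd.apply_N_M n
  case N.L => linear_combination hd.skew (N (-n)) (L n) - hd.apply_L_N n
  case N.M => linear_combination hd.apply_N_M m
  case N.N => linear_combination hd.apply_N_N m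
  case Y.Y => linear_combination hd.apply_Y_Y m

theorem eq_c_add_coboundary (i j : SVIdx) :
    d i j = 2 * (d (L 2) (L (-2)) - 2 * d (L 1) (L (-1))) * c1 i j
      + (d (L 2) (N (-2)) - 2 * d (L 1) (N (-1))) / 2 * c2 i j
      - d (N 1) (N (-1)) * c3 i j + coboundary (potential d) i j := by
  by_cases h : degree_s11 (lieIdx i j) = 0
  · exact hd.eq_c_add_coboundary_of_degree_eq_zero h
  · obtain ⟨h₁, h₂, h₃⟩ := c_eq_zero_of_degree_ne_zero h
    rw [h₁, h₂, h₃, hd.eq_coboundary_of_degree_ne_zero h]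
    ring

end SVIdx.IsCocycle

open SVIdx

namespace ExtSV

variable (h : ExtSV g)

lemma lie_b (i j : SVIdx) : ⁅h.b i, h.b j⁆ = lieCoeff i j • h.b (lieIdx i j) := by
  cases i with
  | L m => cases j with
    | L n => simpa [lieCoeff, lieIdx] using h.LL m n
    | M n => simpa [lieCoeff, lieIdx] using h.LM m n
    | N n => simpa [lieCoeff, lieIdx] using h.LN m n
    | Y n => simpa [lieCoeff, lieIdx] using h.LY m n
  | M m => cases j with
    | L n => rw [← lie_skew, h.LM]; simp [lieCoeff, lieIdx, add_comm]
    | M n => simpa [lieCoeff, lieIdx] using h.MM m n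
    | N n => rw [← lie_skew, h.NM]; simp [lieCoeff, lieIdx, add_comm]
    | Y n => simpa [lieCoeff, lieIdx] using h.MY m n
  | N m => cases j with
    | L n => rw [← lie_skew, h.LN]; simp [lieCoeff, lieIdx, add_comm]
    | M n => simpa [lieCoeff, lieIdx] using h.NM m n
    | N n => simpa [lieCoeff, lieIdx] using h.NN m n
    | Y n => simpa [lieCoeff, lieIdx] using h.NY m n
  | Y m => cases j with
    | L n => rw [← lie_skew, h.LY, ← neg_smul]; simp [lieCoeff, lieIdx, add_comm]
    | M n => rw [← lie_skew, h.MY]; simp [lieCoeff, lieIdx]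
    | N n => rw [← lie_skew, h.NY]; simp [lieCoeff, lieIdx, add_comm]
    | Y n => simpa [lieCoeff, lieIdx] using h.YY m n

@[simp] lemma mkForm_b (c : SVIdx → SVIdx → ℂ) (i j : SVIdx) :
    h.mkForm c (h.b i) (h.b j) = c i j := by
  simp [mkForm]

lemma eq_mkForm (φ : g →ₗ[ℂ] g →ₗ[ℂ] ℂ) :
    φ = h.mkForm fun i j => φ (h.b i) (h.b j) :=
  h.b.ext fun i => h.b.ext fun j => by simp

lemma mkForm_mem_twoCocycles_iff (c : SVIdx → SVIdx → ℂ) :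
    h.mkForm c ∈ twoCocycles g ↔ IsCocycle c := by
  constructor
  · rintro ⟨hskew, hjac⟩
    refine ⟨fun i j => by simpa using hskew (h.b i) (h.b j), fun i j k => ?_⟩
    simpa [h.lie_b] using hjac (h.b i) (h.b j) (h.b k)
  · intro hc
    have hskew : h.mkForm c + (h.mkForm c).flip = 0 :=
      h.b.ext fun i => h.b.ext fun j => by simp [hc.skew i j]
    have hjac : jacobiator (h.mkForm c) = 0 :=
      h.b.ext fun i => h.b.ext fun j => h.b.ext fun k => by
        simpa [jacobiator, h.lie_b] using hc.jacobi i j k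
    refine ⟨fun x y => ?_, fun x y z => ?_⟩
    · exact eq_neg_of_add_eq_zero_left (LinearMap.congr_fun₂ hskew x y)
    · exact LinearMap.congr_fun (LinearMap.congr_fun₂ hjac x y) z

lemma mkForm_coboundary_mem_twoCoboundaries (f : SVIdx → ℂ) :
    h.mkForm (coboundary f) ∈ twoCoboundaries g := by
  have : h.mkForm (coboundary f) =
      (LieModule.toEnd ℂ g g : g →ₗ[ℂ] Module.End ℂ g).compr₂ (h.b.constr ℂ f) :=
    h.b.ext fun i => h.b.ext fun j => by simp [coboundary, h.lie_b]
  exact ⟨h.b.constr ℂ f, fun x y => by simpa using LinearMap.congr_fun₂ this x y⟩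

lemma twoCocycles_le_span_sup_twoCoboundaries :
    twoCocycles g ≤
      Submodule.span ℂ {h.mkForm c1, h.mkForm c2, h.mkForm c3} ⊔ twoCoboundaries g := by
  intro φ hφ
  set d : SVIdx → SVIdx → ℂ := fun i j => φ (h.b i) (h.b j)
  have hd : IsCocycle d := (h.mkForm_mem_twoCocycles_iff d).mp (h.eq_mkForm φ ▸ hφ)
  have hφ_eq : φ = (2 * (d (L 2) (L (-2)) - 2 * d (L 1) (L (-1)))) • h.mkForm c1
      + ((d (L 2) (N (-2)) - 2 * d (L 1) (N (-1))) / 2) • h.mkForm c2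
      + (-d (N 1) (N (-1))) • h.mkForm c3 + h.mkForm (coboundary (potential d)) :=
    h.b.ext fun i => h.b.ext fun j => by
      simp only [LinearMap.add_apply, LinearMap.smul_apply, mkForm_b, smul_eq_mul]
      linear_combination hd.eq_c_add_coboundary i j
  rw [hφ_eq]
  refine add_mem (Submodule.mem_sup_left ?_)
    (Submodule.mem_sup_right (h.mkForm_coboundary_mem_twoCoboundaries _))
  refine add_mem (add_mem ?_ ?_) ?_ <;>
    exact Submodule.smul_mem _ _ (Submodule.subset_span (by simp))

/-- On `(L m, L (-m))` and `(L m, N (-m))` a coboundary is linear in `m` and on `(N m, N (-m))`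
it vanishes, while there `c1` is cubic, `c2` quadratic and `c3` nonzero. -/
lemma eq_zero_of_smul_add_mem_twoCoboundaries {a b c : ℂ}
    (hm : a • h.mkForm c1 + b • h.mkForm c2 + c • h.mkForm c3 ∈ twoCoboundaries g) :
    a = 0 ∧ b = 0 ∧ c = 0 := by
  obtain ⟨f, hf⟩ := hm
  have E (i j : SVIdx) :
      a * c1 i j + b * c2 i j + c * c3 i j = lieCoeff i j * f (h.b (lieIdx i j)) := by
    simpa [h.lie_b] using hf (h.b i) (h.b j)
  have e₁ := E (L 1) (L (-1))
  have e₂ := E (L 2) (L (-2))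
  have e₃ := E (L 1) (N (-1))
  have e₄ := E (L 2) (N (-2))
  have e₅ := E (N 1) (N (-1))
  norm_num [c1, c2, c3, lieCoeff, lieIdx] at e₁ e₂ e₃ e₄ e₅
  refine ⟨?_, ?_, ?_⟩
  · linear_combination 2 * e₂ - 8 * e₁
  · linear_combination e₄ / 2 - e₃
  · linear_combination e₅

end ExtSV

/-- `H²(sv~, ℂ)` is 3-dimensional, spanned by the classes of `φ₁, φ₂, φ₃`:
the cocycles `φ₁, φ₂, φ₃` together with the coboundaries span all 2-cocycles,
and their classes modulo coboundaries are linearly independent.  (This says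
exactly that `H² = Z²/B²` has dimension 3 with basis the classes of the `φᵢ`.) -/
theorem extSV_H2_dim_three {g : Type*} [LieRing g] [LieAlgebra ℂ g] (h : ExtSV g) :
    twoCoboundaries g ≤ twoCocycles g ∧
    h.mkForm (c1) ∈ twoCocycles g ∧ h.mkForm (c2) ∈ twoCocycles g ∧
      h.mkForm (c3) ∈ twoCocycles g ∧
    Submodule.span ℂ {h.mkForm c1, h.mkForm c2, h.mkForm c3} ⊔ twoCoboundaries g =
      twoCocycles g ∧
    (∀ a b c : ℂ, a • h.mkForm c1 + b • h.mkForm c2 + c • h.mkForm c3 ∈ twoCoboundaries g →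
      a = 0 ∧ b = 0 ∧ c = 0) := by
  obtain ⟨hc₁, hc₂, hc₃⟩ := isCocycle_c1_c2_c3
  have mem₁ := (h.mkForm_mem_twoCocycles_iff c1).mpr hc₁
  have mem₂ := (h.mkForm_mem_twoCocycles_iff c2).mpr hc₂
  have mem₃ := (h.mkForm_mem_twoCocycles_iff c3).mpr hc₃
  refine ⟨twoCoboundaries_le_twoCocycles, mem₁, mem₂, mem₃,
    le_antisymm ?_ h.twoCocycles_le_span_sup_twoCoboundaries,
    fun _ _ _ => h.eq_zero_of_smul_add_mem_twoCoboundaries⟩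
  refine sup_le (Submodule.span_le.mpr ?_) twoCoboundaries_le_twoCocycles
  rintro φ (rfl | rfl | rfl)
  exacts [mem₁, mem₂, mem₃]
end

section
/- Each of the maps φ₁(L_m,L_n)=δ_{m+n,0}(m³−m)/12, φ₂(L_m,N_n)=δ_{m+n,0}(m²−m), φ₃(N_m,N_n)=δ_{m+n,0}n (extended by skew-symmetry and by zero on all other pairs of basis vectors) is a 2-cocycle on the extended Schrödinger-Virasoro algebra sv~. -/
variable (g : Type*) [LieRing g] [LieAlgebra ℂ g]

variable {g}

/-!
A bilinear form on a Lie algebra is a 2-cocycle as soon as skew-symmetry and the cocycle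
identity hold on basis vectors. In `sv~` the bracket of two basis vectors is a multiple of a
single basis vector, so for a form given by structure constants both conditions become
identities between those constants, checked by cases on the types of the basis vectors. Since
each `φᵢ` vanishes off degree zero, the only nontrivial cases are the triples `(L, L, L)` for
`φ₁`, `(L, L, N)` for `φ₂` and `(L, N, N)` for `φ₃`, where substituting `k = -m - n` turns
the cocycle identity into a polynomial identity.
-/

/-- Bundled as a trilinear map so that its vanishing can be checked on a basis. -/
noncomputable def lieCyclicSum (φ : g →ₗ[ℂ] g →ₗ[ℂ] ℂ) : g →ₗ[ℂ] g →ₗ[ℂ] g →ₗ[ℂ] ℂ :=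
  let T := (LieModule.toEnd ℂ g g : g →ₗ[ℂ] Module.End ℂ g).compr₂ φ
  T + (LinearMap.lflip.toLinearMap ∘ₗ T).flip + LinearMap.lflip.toLinearMap ∘ₗ T.flip

theorem lieCyclicSum_apply (φ : g →ₗ[ℂ] g →ₗ[ℂ] ℂ) (x y z : g) :
    lieCyclicSum φ x y z = φ ⁅x, y⁆ z + φ ⁅y, z⁆ x + φ ⁅z, x⁆ y :=
  rfl

theorem mem_twoCocycles_of_basis {ι : Type*} (b : Module.Basis ι ℂ g) (φ : g →ₗ[ℂ] g →ₗ[ℂ] ℂ)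
    (hskew : ∀ i j, φ (b i) (b j) = -φ (b j) (b i))
    (hcyc : ∀ i j k, lieCyclicSum φ (b i) (b j) (b k) = 0) :
    φ ∈ twoCocycles g := by
  have hflip : φ = -φ.flip := b.ext fun i => b.ext fun j => hskew i j
  have hzero : lieCyclicSum φ = 0 := b.ext fun i => b.ext fun j => b.ext fun k => hcyc i j k
  exact ⟨fun x y => LinearMap.congr_fun₂ hflip x y,
    fun x y z => LinearMap.congr_fun (LinearMap.congr_fun₂ hzero x y) z⟩

/-- Brackets of basis vectors of `sv~` are monomials; pairs with zero bracket get the dummy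
index `L 0`. -/
noncomputable def svBracket : SVIdx → SVIdx → ℂ × SVIdx
  | .L m, .L n => ((n : ℂ) - m, .L (m + n))
  | .L m, .M n => ((n : ℂ), .M (m + n))
  | .M n, .L m => (-(n : ℂ), .M (m + n))
  | .L m, .N n => ((n : ℂ), .N (m + n))
  | .N n, .L m => (-(n : ℂ), .N (m + n))
  | .L m, .Y n => ((n : ℂ) + (1 - m) / 2, .Y (m + n))
  | .Y n, .L m => (-((n : ℂ) + (1 - m) / 2), .Y (m + n))
  | .M _, .M _ => (0, .L 0)
  | .N _, .N _ => (0, .L 0)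
  | .Y m, .Y n => ((m : ℂ) - n, .M (m + n + 1))
  | .N m, .M n => (2, .M (m + n))
  | .M n, .N m => (-2, .M (m + n))
  | .N m, .Y n => (1, .Y (m + n))
  | .Y n, .N m => (-1, .Y (m + n))
  | .M _, .Y _ => (0, .L 0)
  | .Y _, .M _ => (0, .L 0)

theorem ExtSV.lie_basis (h : ExtSV g) (i j : SVIdx) :
    ⁅h.b i, h.b j⁆ = (svBracket i j).1 • h.b (svBracket i j).2 := by
  rcases i with m | m | m | m <;> rcases j with n | n | n | n <;>
    simp only [svBracket, h.LL, h.LM, h.LN, h.LY, h.MM, h.NN, h.YY, h.NM, h.NY, h.MY,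
      one_smul, zero_smul]
  all_goals rw [← lie_skew]
  all_goals simp only [h.LM, h.LN, h.LY, h.NM, h.NY, h.MY, neg_smul, neg_zero, one_smul]

noncomputable def svCyclicSum (c : SVIdx → SVIdx → ℂ) (i j k : SVIdx) : ℂ :=
  (svBracket i j).1 * c (svBracket i j).2 k + (svBracket j k).1 * c (svBracket j k).2 i +
    (svBracket k i).1 * c (svBracket k i).2 j

theorem ExtSV.mkForm_basis (h : ExtSV g) (c : SVIdx → SVIdx → ℂ) (i j : SVIdx) :
    h.mkForm c (h.b i) (h.b j) = c i j := by
  simp [ExtSV.mkForm]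

theorem ExtSV.lieCyclicSum_mkForm_basis (h : ExtSV g) (c : SVIdx → SVIdx → ℂ) (i j k : SVIdx) :
    lieCyclicSum (h.mkForm c) (h.b i) (h.b j) (h.b k) = svCyclicSum c i j k := by
  simp only [lieCyclicSum_apply, h.lie_basis, map_smul, LinearMap.smul_apply, h.mkForm_basis,
    smul_eq_mul, svCyclicSum]

theorem ExtSV.mkForm_mem_twoCocycles (h : ExtSV g) {c : SVIdx → SVIdx → ℂ}
    (hskew : ∀ i j, c i j = -c j i) (hcyc : ∀ i j k, svCyclicSum c i j k = 0) :
    h.mkForm c ∈ twoCocycles g :=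
  mem_twoCocycles_of_basis h.b _ (by simpa only [h.mkForm_basis] using hskew)
    (by simpa only [h.lieCyclicSum_mkForm_basis] using hcyc)

theorem c1_skew (i j : SVIdx) : c1 i j = -c1 j i := by
  rcases i with m | m | m | m <;> rcases j with n | n | n | n <;> simp only [c1, neg_zero]
  split_ifs <;> first
    | (exfalso; omega)
    | (obtain rfl : n = -m; omega; push_cast; ring)
    | simp

theorem c2_skew (i j : SVIdx) : c2 i j = -c2 j i := by
  rcases i with m | m | m | m <;> rcases j with n | n | n | n <;> simp only [c2, neg_zero]
  all_goals split_ifs <;> simp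

theorem c3_skew (i j : SVIdx) : c3 i j = -c3 j i := by
  rcases i with m | m | m | m <;> rcases j with n | n | n | n <;> simp only [c3, neg_zero]
  split_ifs <;> first
    | (exfalso; omega)
    | (obtain rfl : n = -m; omega; push_cast; ring)
    | simp

theorem svCyclicSum_c1 (i j k : SVIdx) : svCyclicSum c1 i j k = 0 := by
  rcases i with m | m | m | m <;> rcases j with n | n | n | n <;> rcases k with k | k | k | k <;>
    simp only [svCyclicSum, svBracket, c1, mul_zero, zero_mul, add_zero, zero_add]
  split_ifs <;> first
    | (exfalso; omega)
    | (obtain rfl : k = -m - n; omega; push_cast; ring)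
    | simp

theorem svCyclicSum_c2 (i j k : SVIdx) : svCyclicSum c2 i j k = 0 := by
  rcases i with m | m | m | m <;> rcases j with n | n | n | n <;> rcases k with k | k | k | k <;>
    simp only [svCyclicSum, svBracket, c2, mul_zero, zero_mul, add_zero, zero_add]
  all_goals split_ifs <;> first
    | (exfalso; omega)
    | (obtain rfl : k = -m - n; omega; push_cast; ring)
    | simp

theorem svCyclicSum_c3 (i j k : SVIdx) : svCyclicSum c3 i j k = 0 := by
  rcases i with m | m | m | m <;> rcases j with n | n | n | n <;> rcases k with k | k | k | k <;>
    simp only [svCyclicSum, svBracket, c3, mul_zero, add_zero, zero_add]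
  all_goals split_ifs <;> first
    | (exfalso; omega)
    | (obtain rfl : k = -m - n; omega; push_cast; ring)
    | simp

/-- Each of `φ₁, φ₂, φ₃` (extended by skew-symmetry and by zero on all other
pairs of basis vectors) is a 2-cocycle on `sv~`. -/
theorem extSV_phi_are_cocycles {g : Type*} [LieRing g] [LieAlgebra ℂ g] (h : ExtSV g) :
    h.mkForm c1 ∈ twoCocycles g ∧ h.mkForm c2 ∈ twoCocycles g ∧
      h.mkForm c3 ∈ twoCocycles g :=
  ⟨h.mkForm_mem_twoCocycles c1_skew svCyclicSum_c1,
    h.mkForm_mem_twoCocycles c2_skew svCyclicSum_c2,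
    h.mkForm_mem_twoCocycles c3_skew svCyclicSum_c3⟩
end

section
/- The vector space with basis {L_n, M_n, N_n, Y_{n+1/2}, C_L, C_LN, C_N | n ∈ ℤ} with products [L_m,L_n]=(n−m)L_{m+n}+δ_{m+n,0}(m³−m)/12·C_L, [N_m,N_n]=nδ_{m+n,0}C_N, [L_m,N_n]=nN_{m+n}+δ_{m+n,0}(m²−m)C_LN, [Y_{m+1/2},Y_{n+1/2}]=(m−n)M_{m+n+1}, [L_m,M_n]=nM_{m+n}, [L_m,Y_{n+1/2}]=(n+(1−m)/2)Y_{m+n+1/2}, [N_m,M_n]=2M_{m+n}, [N_m,Y_{n+1/2}]=Y_{m+n+1/2}, all other brackets among basis elements zero and C_L, C_LN, C_N central, is a Lie algebra. -/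
/-- Index type for the basis of the universal central extension `sv^` of the
extended Schrödinger-Virasoro Lie algebra.  `Y n` stands for `Y_{n+1/2}`. -/
inductive SVHatIdx : Type
  | L : ℤ → SVHatIdx
  | M : ℤ → SVHatIdx
  | N : ℤ → SVHatIdx
  | Y : ℤ → SVHatIdx
  | CL : SVHatIdx
  | CLN : SVHatIdx
  | CN : SVHatIdx

/-- A complex Lie algebra `g` realizes the structure constants of `sv^`:
it has a basis indexed by `SVHatIdx` with the prescribed brackets, the
elements `C_L, C_LN, C_N` being central and all remaining brackets among
basis vectors zero. -/
structure ExtSVHat (g : Type*) [LieRing g] [LieAlgebra ℂ g] where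
  b : Module.Basis SVHatIdx ℂ g
  LL : ∀ m n : ℤ, ⁅b (SVHatIdx.L m), b (SVHatIdx.L n)⁆ =
      ((n : ℂ) - (m : ℂ)) • b (SVHatIdx.L (m + n)) +
        (if m + n = 0 then ((m : ℂ) ^ 3 - m) / 12 else 0) • b SVHatIdx.CL
  NN : ∀ m n : ℤ, ⁅b (SVHatIdx.N m), b (SVHatIdx.N n)⁆ =
      (if m + n = 0 then (n : ℂ) else 0) • b SVHatIdx.CN
  LN : ∀ m n : ℤ, ⁅b (SVHatIdx.L m), b (SVHatIdx.N n)⁆ =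
      (n : ℂ) • b (SVHatIdx.N (m + n)) +
        (if m + n = 0 then (m : ℂ) ^ 2 - m else 0) • b SVHatIdx.CLN
  YY : ∀ m n : ℤ, ⁅b (SVHatIdx.Y m), b (SVHatIdx.Y n)⁆ =
      ((m : ℂ) - (n : ℂ)) • b (SVHatIdx.M (m + n + 1))
  LM : ∀ m n : ℤ, ⁅b (SVHatIdx.L m), b (SVHatIdx.M n)⁆ = (n : ℂ) • b (SVHatIdx.M (m + n))
  LY : ∀ m n : ℤ, ⁅b (SVHatIdx.L m), b (SVHatIdx.Y n)⁆ =
      ((n : ℂ) + (1 - (m : ℂ)) / 2) • b (SVHatIdx.Y (m + n))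
  NM : ∀ m n : ℤ, ⁅b (SVHatIdx.N m), b (SVHatIdx.M n)⁆ = (2 : ℂ) • b (SVHatIdx.M (m + n))
  NY : ∀ m n : ℤ, ⁅b (SVHatIdx.N m), b (SVHatIdx.Y n)⁆ = b (SVHatIdx.Y (m + n))
  MM : ∀ m n : ℤ, ⁅b (SVHatIdx.M m), b (SVHatIdx.M n)⁆ = 0
  MY : ∀ m n : ℤ, ⁅b (SVHatIdx.M m), b (SVHatIdx.Y n)⁆ = 0
  MN : ∀ m n : ℤ, ⁅b (SVHatIdx.M m), b (SVHatIdx.N n)⁆ = -((2 : ℂ) • b (SVHatIdx.M (n + m)))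
  centralCL : ∀ x : g, ⁅x, b SVHatIdx.CL⁆ = 0
  centralCLN : ∀ x : g, ⁅x, b SVHatIdx.CLN⁆ = 0
  centralCN : ∀ x : g, ⁅x, b SVHatIdx.CN⁆ = 0

/-!
The bracket is the bilinear extension of the structure constants to the free module
`SVHatIdx →₀ ℂ`. By multilinearity, the Lie axioms for such a bracket reduce to antisymmetry and
the Leibniz rule on basis vectors; for `sv^` these are finitely many families of polynomial
identities in the integer indices. The central terms only occur when the indices sum to zero, and
on that hyperplane the identities are the cocycle conditions for `C_L`, `C_LN` and `C_N`.
-/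

namespace StructureConstants

open Finsupp

variable {ι R : Type*} [CommRing R] {c : ι → ι → ι →₀ R}

variable (c) in
noncomputable def bracket : (ι →₀ R) →ₗ[R] (ι →₀ R) →ₗ[R] ι →₀ R :=
  linearCombination R fun i => linearCombination R (c i)

@[simp]
theorem bracket_single_single (i j : ι) (a b : R) :
    bracket c (single i a) (single j b) = (a * b) • c i j := by
  simp [bracket, mul_smul, smul_comm a b]

theorem bracket_single_one_single_one (i j : ι) :
    bracket c (single i 1) (single j (1 : R)) = c i j := by
  rw [bracket_single_single, mul_one, one_smul]

theorem bracket_flip_add_self (hskew : ∀ i j, c i j = -c j i) :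
    (bracket c).flip + bracket c = 0 :=
  lhom_ext fun j b => lhom_ext fun i a => by simp [hskew j i, mul_comm a b]

theorem bracket_self (hself : ∀ i, c i i = 0) (hskew : ∀ i j, c i j = -c j i)
    (x : ι →₀ R) : bracket c x x = 0 := by
  induction x using Finsupp.induction with
  | zero => simp
  | single_add i a x _ _ ih =>
    have hanti := LinearMap.congr_fun₂ (bracket_flip_add_self hskew) (single i a) x
    simp only [LinearMap.add_apply, LinearMap.flip_apply, LinearMap.zero_apply] at hanti
    simp only [map_add, LinearMap.add_apply, ih, bracket_single_single, hself, smul_zero,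
      add_zero, zero_add, hanti]

theorem bracket_leibniz
    (hleibniz : ∀ i j k, bracket c (single i 1) (c j k) =
      bracket c (c i j) (single k 1) + bracket c (single j 1) (c i k))
    (x y z : ι →₀ R) :
    bracket c x (bracket c y z) = bracket c (bracket c x y) z + bracket c y (bracket c x z) := by
  induction x using Finsupp.induction_linear with
  | zero => simp
  | add x x' hx hx' => simp only [map_add, LinearMap.add_apply, hx, hx']; abel
  | single i a =>
  induction y using Finsupp.induction_linear with
  | zero => simp
  | add y y' hy hy' => simp only [map_add, LinearMap.add_apply, hy, hy']; abel
  | single j b =>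
  induction z using Finsupp.induction_linear with
  | zero => simp
  | add z z' hz hz' => simp only [map_add, hz, hz']; abel
  | single k d =>
  rw [← smul_single_one i a, ← smul_single_one j b, ← smul_single_one k d]
  simp only [map_smul, LinearMap.smul_apply, bracket_single_one_single_one, hleibniz i j k]
  module

theorem bracket_single_one_eq_zero {i : ι} (hi : ∀ j, c j i = 0) (x : ι →₀ R) :
    bracket c x (single i 1) = 0 :=
  LinearMap.congr_fun (f := (bracket c).flip (single i 1)) (g := 0)
    (lhom_ext fun j a => by simp [hi]) x

variable (c) in
structure IsLie : Prop where
  apply_self : ∀ i, c i i = 0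
  skew : ∀ i j, c i j = -c j i
  leibniz : ∀ i j k, bracket c (single i 1) (c j k) =
    bracket c (c i j) (single k 1) + bracket c (single j 1) (c i k)

noncomputable abbrev lieRing (h : IsLie c) : LieRing (ι →₀ R) where
  bracket x y := bracket c x y
  add_lie x y z := by simp
  lie_add x := map_add (bracket c x)
  lie_self := bracket_self h.apply_self h.skew
  leibniz_lie := bracket_leibniz h.leibniz

noncomputable abbrev lieAlgebra (h : IsLie c) : @LieAlgebra R (ι →₀ R) _ (lieRing h) :=
  let _ := lieRing h
  { lie_smul := fun a x y => map_smul (bracket c x) a y }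

end StructureConstants

namespace SVHatIdx

open Finsupp StructureConstants

noncomputable def structureConstants : SVHatIdx → SVHatIdx → SVHatIdx →₀ ℂ
  | L m, L n => ((n : ℂ) - m) • single (L (m + n)) 1 +
      (if m + n = 0 then ((m : ℂ) ^ 3 - m) / 12 else 0) • single CL 1
  | L m, M n => (n : ℂ) • single (M (m + n)) 1
  | L m, N n => (n : ℂ) • single (N (m + n)) 1 +
      (if m + n = 0 then (m : ℂ) ^ 2 - m else 0) • single CLN 1
  | L m, Y n => ((n : ℂ) + (1 - (m : ℂ)) / 2) • single (Y (m + n)) 1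
  | M m, L n => -((m : ℂ) • single (M (n + m)) 1)
  | M m, N n => -((2 : ℂ) • single (M (n + m)) 1)
  | N m, L n => -((m : ℂ) • single (N (n + m)) 1 +
      (if n + m = 0 then (n : ℂ) ^ 2 - n else 0) • single CLN 1)
  | N m, M n => (2 : ℂ) • single (M (m + n)) 1
  | N m, N n => (if m + n = 0 then (n : ℂ) else 0) • single CN 1
  | N m, Y n => single (Y (m + n)) 1
  | Y m, L n => -(((m : ℂ) + (1 - (n : ℂ)) / 2) • single (Y (n + m)) 1)
  | Y m, N n => -single (Y (n + m)) 1
  | Y m, Y n => ((m : ℂ) - n) • single (M (m + n + 1)) 1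
  | _, _ => 0

theorem structureConstants_skew (i j : SVHatIdx) :
    structureConstants i j = -structureConstants j i := by
  rcases i with m|m|m|m|_|_|_ <;> rcases j with n|n|n|n|_|_|_ <;>
    simp only [structureConstants, neg_add_rev, neg_neg, neg_zero, add_comm]
  all_goals try split_ifs
  all_goals first
    | module
    | ((obtain rfl : n = -m := by omega); push_cast; module)

theorem structureConstants_self (i : SVHatIdx) : structureConstants i i = 0 :=
  self_eq_neg.mp (structureConstants_skew i i)

set_option maxHeartbeats 4000000 in
theorem structureConstants_leibniz (i j k : SVHatIdx) :
    bracket structureConstants (single i 1) (structureConstants j k) =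
      bracket structureConstants (structureConstants i j) (single k 1) +
        bracket structureConstants (single j 1) (structureConstants i k) := by
  rcases i with m|m|m|m|_|_|_ <;> rcases j with n|n|n|n|_|_|_ <;> rcases k with p|p|p|p|_|_|_ <;>
    simp only [structureConstants, bracket_single_single, map_add, map_smul, map_neg, map_zero,
      LinearMap.add_apply, LinearMap.smul_apply, LinearMap.neg_apply, LinearMap.zero_apply,
      smul_zero, add_zero, zero_add, neg_zero, smul_neg, neg_neg, smul_smul, smul_add,
      mul_ite, mul_zero, mul_one, one_mul, one_smul, Int.cast_add, Int.cast_one,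
      add_assoc, add_comm, add_left_comm]
  all_goals try split_ifs
  all_goals first
    | module
    | ((obtain rfl : p = -m - n := by omega); push_cast; module)

theorem structureConstants_eq_zero_of_central {i : SVHatIdx} (hi : i = CL ∨ i = CLN ∨ i = CN)
    (j : SVHatIdx) : structureConstants j i = 0 := by
  rcases hi with rfl | rfl | rfl <;> cases j <;> rfl

theorem isLie_structureConstants : IsLie structureConstants :=
  ⟨structureConstants_self, structureConstants_skew, structureConstants_leibniz⟩

end SVHatIdx

open StructureConstants SVHatIdx in
/-- The structure constants of `sv^` do define a Lie algebra: there exists a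
complex Lie algebra with a basis realizing them. -/
theorem extSVHat_isLieAlgebra :
    ∃ (g : Type) (i : LieRing g) (j : @LieAlgebra ℂ g _ i), Nonempty (@ExtSVHat g i j) := by
  let _ := lieRing isLie_structureConstants
  let _ := lieAlgebra isLie_structureConstants
  refine ⟨SVHatIdx →₀ ℂ, inferInstance, inferInstance,
    ⟨⟨Finsupp.basisSingleOne, ?_, ?_, ?_, ?_, ?_, ?_, ?_, ?_, ?_, ?_, ?_, ?_, ?_, ?_⟩⟩⟩
  all_goals first
    | intro m n; exact bracket_single_one_single_one _ _
    | intro x; exact bracket_single_one_eq_zero (structureConstants_eq_zero_of_central (by simp)) x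
end

section
/- For each ε ∈ {±1}, λ ∈ ℤ, a, d ∈ ℂ*, the linear map σ on sv~ determined by σ(L_n) = aⁿεL_{εn} + aⁿλN_{εn}, σ(N_n) = aⁿN_{εn}, σ(M_n) = εd²a^{n−1}M_{ε(n−2λ)}, σ(Y_{n+1/2}) = d aⁿ Y_{ε(n+1/2−λ)} is a Lie algebra automorphism of sv~. -/
/-- `σ` acts on the basis of `sv~` by the formulas
`σ(L_n) = aⁿ ε L_{εn} + aⁿ λ N_{εn}`, `σ(N_n) = aⁿ N_{εn}`,
`σ(M_n) = ε d² a^{n-1} M_{ε(n-2λ)}`, `σ(Y_{n+1/2}) = d aⁿ Y_{ε(n+1/2-λ)}`. -/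
def ExtSV.IsSigma {g : Type*} [LieRing g] [LieAlgebra ℂ g] (h : ExtSV g)
    (ε lam : ℤ) (a d : ℂ) (σ : g → g) : Prop :=
  (∀ n : ℤ, σ (h.b (SVIdx.L n)) =
      (a ^ n * (ε : ℂ)) • h.b (SVIdx.L (ε * n)) +
        (a ^ n * (lam : ℂ)) • h.b (SVIdx.N (ε * n))) ∧
  (∀ n : ℤ, σ (h.b (SVIdx.N n)) = a ^ n • h.b (SVIdx.N (ε * n))) ∧
  (∀ n : ℤ, σ (h.b (SVIdx.M n)) =
      ((ε : ℂ) * d ^ 2 * a ^ (n - 1)) • h.b (SVIdx.M (ε * (n - 2 * lam)))) ∧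
  (∀ n : ℤ, σ (h.b (SVIdx.Y n)) =
      (d * a ^ n) • h.b (SVIdx.Y (ε * n + (ε - 1) / 2 - ε * lam)))

/-!
Take `σ` to be the linear extension of the basis formulas. It preserves brackets because it
carries each structure relation to a scalar multiple of a structure relation: the weights `aⁿ`
are additive in the index, `ε² = 1`, and the `Y`-indices `kₙ = εn + (ε - 1)/2 - ελ` satisfy
`kₘ + kₙ + 1 = ε(m + n + 1 - 2λ)`. It is bijective because it has a left inverse of the same
shape, with parameters `(-λ, a⁻¹, (d a^λ)⁻¹)` for `ε = 1` and `(λ, a, a^(1-λ) / d)` for `ε = -1`;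
that left inverse then has a left inverse itself, so it is injective, and hence `σ` is onto.
-/

theorem Module.Basis.map_lie_of_map_lie_basis {ι R L L' : Type*} [CommRing R] [LieRing L]
    [LieAlgebra R L] [LieRing L'] [LieAlgebra R L'] (b : Module.Basis ι R L) (f : L →ₗ[R] L')
    (hf : ∀ i j, f ⁅b i, b j⁆ = ⁅f (b i), f (b j)⁆) (x y : L) : f ⁅x, y⁆ = ⁅f x, f y⁆ := by
  have key : (LieModule.toEnd R L L : L →ₗ[R] Module.End R L).compr₂ f =
      (LieModule.toEnd R L' L' : L' →ₗ[R] Module.End R L').compl₁₂ f f :=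
    LinearMap.ext_basis b b hf
  exact LinearMap.congr_fun₂ key x y

namespace ExtSV

variable {g : Type*} [LieRing g] [LieAlgebra ℂ g] (h : ExtSV g)

theorem lie_M_L (m n : ℤ) : ⁅h.b (.M m), h.b (.L n)⁆ = -((m : ℂ) • h.b (.M (n + m))) := by
  rw [← lie_skew, h.LM]

theorem lie_N_L (m n : ℤ) : ⁅h.b (.N m), h.b (.L n)⁆ = -((m : ℂ) • h.b (.N (n + m))) := by
  rw [← lie_skew, h.LN]

theorem lie_Y_L (m n : ℤ) :
    ⁅h.b (.Y m), h.b (.L n)⁆ = -(((m : ℂ) + (1 - (n : ℂ)) / 2) • h.b (.Y (n + m))) := by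
  rw [← lie_skew, h.LY]

theorem lie_M_N (m n : ℤ) : ⁅h.b (.M m), h.b (.N n)⁆ = -((2 : ℂ) • h.b (.M (n + m))) := by
  rw [← lie_skew, h.NM]

theorem lie_Y_N (m n : ℤ) : ⁅h.b (.Y m), h.b (.N n)⁆ = -h.b (.Y (n + m)) := by
  rw [← lie_skew, h.NY]

theorem lie_Y_M (m n : ℤ) : ⁅h.b (.Y m), h.b (.M n)⁆ = 0 := by
  rw [← lie_skew, h.MY, neg_zero]

noncomputable def sigma (ε lam : ℤ) (a d : ℂ) : g →ₗ[ℂ] g :=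
  h.b.constr ℂ fun
    | .L n => (a ^ n * (ε : ℂ)) • h.b (.L (ε * n)) + (a ^ n * (lam : ℂ)) • h.b (.N (ε * n))
    | .N n => a ^ n • h.b (.N (ε * n))
    | .M n => ((ε : ℂ) * d ^ 2 * a ^ (n - 1)) • h.b (.M (ε * (n - 2 * lam)))
    | .Y n => (d * a ^ n) • h.b (.Y (ε * n + (ε - 1) / 2 - ε * lam))

theorem isSigma_sigma (ε lam : ℤ) (a d : ℂ) : h.IsSigma ε lam a d (h.sigma ε lam a d) := by
  refine ⟨fun n => ?_, fun n => ?_, fun n => ?_, fun n => ?_⟩ <;> simp [sigma]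

theorem sigma_lie_basis {ε : ℤ} (hε : ε = 1 ∨ ε = -1) (lam : ℤ) {a : ℂ} (ha : a ≠ 0) (d : ℂ)
    (i j : SVIdx) :
    h.sigma ε lam a d ⁅h.b i, h.b j⁆ = ⁅h.sigma ε lam a d (h.b i), h.sigma ε lam a d (h.b j)⁆ := by
  rcases hε with rfl | rfl <;> rcases i with m | m | m | m <;> rcases j with n | n | n | n <;>
    simp only [h.LL, h.MM, h.NN, h.YY, h.LM, h.LN, h.LY, h.NM, h.NY, h.MY, h.lie_M_L, h.lie_N_L,
      h.lie_Y_L, h.lie_M_N, h.lie_Y_N, h.lie_Y_M, sigma, Module.Basis.constr_basis, map_smul,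
      map_neg, map_zero, lie_add, add_lie, lie_smul, smul_lie] <;>
    push_cast <;> (try ring_nf) <;> (try simp only [zpow_add₀ ha]) <;> match_scalars <;> ring

theorem exists_sigma_comp_sigma_eq_id {ε : ℤ} (hε : ε = 1 ∨ ε = -1) (lam : ℤ) {a d : ℂ}
    (ha : a ≠ 0) (hd : d ≠ 0) :
    ∃ (lam' : ℤ) (a' d' : ℂ), a' ≠ 0 ∧ d' ≠ 0 ∧
      h.sigma ε lam' a' d' ∘ₗ h.sigma ε lam a d = LinearMap.id := by
  rcases hε with rfl | rfl <;>
    [refine ⟨-lam, a⁻¹, (d * a ^ lam)⁻¹, inv_ne_zero ha,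
      inv_ne_zero (mul_ne_zero hd (zpow_ne_zero _ ha)), h.b.ext fun i => ?_⟩;
    refine ⟨lam, a, a ^ (1 - lam) / d, ha, div_ne_zero (zpow_ne_zero _ ha) hd,
      h.b.ext fun i => ?_⟩] <;>
    rcases i with n | n | n | n <;>
    simp only [LinearMap.comp_apply, LinearMap.id_apply, sigma, Module.Basis.constr_basis,
      map_add, map_smul, smul_smul] <;>
    push_cast <;> ring_nf <;> match_scalars <;>
    simp only [inv_zpow, zpow_add₀ ha, zpow_sub₀ ha, zpow_neg, zpow_mul, zpow_ofNat] <;>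
    field_simp <;> ring

theorem sigma_bijective {ε : ℤ} (hε : ε = 1 ∨ ε = -1) (lam : ℤ) {a d : ℂ} (ha : a ≠ 0)
    (hd : d ≠ 0) : Function.Bijective (h.sigma ε lam a d) := by
  obtain ⟨lam', a', d', ha', hd', hinv⟩ := h.exists_sigma_comp_sigma_eq_id hε lam ha hd
  obtain ⟨_, _, _, -, -, hinv'⟩ := h.exists_sigma_comp_sigma_eq_id hε lam' ha' hd'
  have hleft : Function.LeftInverse (h.sigma ε lam' a' d') (h.sigma ε lam a d) :=
    LinearMap.congr_fun hinv
  exact ⟨hleft.injective,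
    (hleft.rightInverse_of_injective (LinearMap.injective_of_comp_eq_id _ _ hinv')).surjective⟩

noncomputable def sigmaLieHom {ε : ℤ} (hε : ε = 1 ∨ ε = -1) (lam : ℤ) {a : ℂ} (ha : a ≠ 0)
    (d : ℂ) : g →ₗ⁅ℂ⁆ g :=
  { h.sigma ε lam a d with
    map_lie' := h.b.map_lie_of_map_lie_basis _ (h.sigma_lie_basis hε lam ha d) _ _ }

end ExtSV

/-- For `ε ∈ {±1}`, `λ ∈ ℤ`, `a, d ∈ ℂ*`, the linear map determined by the
formulas of `ExtSV.IsSigma` is a Lie algebra automorphism of `sv~`. -/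
theorem extSV_sigma_is_automorphism {g : Type*} [LieRing g] [LieAlgebra ℂ g] (h : ExtSV g)
    (ε lam : ℤ) (hε : ε = 1 ∨ ε = -1) (a d : ℂ) (ha : a ≠ 0) (hd : d ≠ 0) :
    ∃ σ : g ≃ₗ⁅ℂ⁆ g, h.IsSigma ε lam a d σ :=
  ⟨.ofBijective (h.sigmaLieHom hε lam ha d) (h.sigma_bijective hε lam ha hd),
    h.isSigma_sigma ε lam a d⟩
end

section
/- The automorphisms σ(ε,λ,a,d) of sv~ compose according to the rule σ(ε₁,λ₁,a₁,d₁)∘σ(ε₂,λ₂,a₂,d₂) = σ(ε₁ε₂, ε₂λ₁+λ₂, a₁^{ε₂}a₂, d₁d₂a₁^{(ε₂−1)/2−ε₂λ₂}). -/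
/-- On `Y`-indices `σ` acts by `n + 1/2 ↦ ε (n + 1/2) - 1/2 = ε n + (ε - 1) / 2 + 1/2`, and this is
the cocycle identity of that shift. -/
lemma half_shift_mul {ε₁ ε₂ : ℤ} (hε₁ : ε₁ = 1 ∨ ε₁ = -1) (hε₂ : ε₂ = 1 ∨ ε₂ = -1) :
    ε₁ * ((ε₂ - 1) / 2) + (ε₁ - 1) / 2 = (ε₁ * ε₂ - 1) / 2 := by
  rcases hε₁ with rfl | rfl <;> rcases hε₂ with rfl | rfl <;> rfl

namespace ExtSV.IsSigma

variable {g : Type*} [LieRing g] [LieAlgebra ℂ g] {h : ExtSV g}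
  {ε₁ ε₂ lam₁ lam₂ : ℤ} {a₁ a₂ d₁ d₂ d₃ : ℂ} {σ₁ σ₂ σ₃ : g →ₗ[ℂ] g}

lemma comp_apply_L (h₁ : h.IsSigma ε₁ lam₁ a₁ d₁ σ₁) (h₂ : h.IsSigma ε₂ lam₂ a₂ d₂ σ₂)
    (h₃ : h.IsSigma (ε₁ * ε₂) (ε₂ * lam₁ + lam₂) (a₁ ^ ε₂ * a₂) d₃ σ₃) (n : ℤ) :
    σ₁ (σ₂ (h.b (.L n))) = σ₃ (h.b (.L n)) := by
  rw [h₂.1, map_add, map_smul, map_smul, h₁.1, h₁.2.1, h₃.1, mul_zpow, ← zpow_mul,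
    mul_assoc ε₁]
  push_cast
  module

lemma comp_apply_N (h₁ : h.IsSigma ε₁ lam₁ a₁ d₁ σ₁) (h₂ : h.IsSigma ε₂ lam₂ a₂ d₂ σ₂)
    (h₃ : h.IsSigma (ε₁ * ε₂) (ε₂ * lam₁ + lam₂) (a₁ ^ ε₂ * a₂) d₃ σ₃) (n : ℤ) :
    σ₁ (σ₂ (h.b (.N n))) = σ₃ (h.b (.N n)) := by
  rw [h₂.2.1, map_smul, h₁.2.1, h₃.2.1, mul_zpow, ← zpow_mul, mul_assoc ε₁, smul_smul,
    mul_comm]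

lemma comp_apply_M (h₁ : h.IsSigma ε₁ lam₁ a₁ d₁ σ₁) (h₂ : h.IsSigma ε₂ lam₂ a₂ d₂ σ₂)
    (h₃ : h.IsSigma (ε₁ * ε₂) (ε₂ * lam₁ + lam₂) (a₁ ^ ε₂ * a₂)
      (d₁ * d₂ * a₁ ^ ((ε₂ - 1) / 2 - ε₂ * lam₂)) σ₃)
    (hε₂ : ε₂ = 1 ∨ ε₂ = -1) (ha₁ : a₁ ≠ 0) (n : ℤ) :
    σ₁ (σ₂ (h.b (.M n))) = σ₃ (h.b (.M n)) := by
  have hsq : ε₂ * ε₂ = 1 := by rcases hε₂ with rfl | rfl <;> rfl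
  have hodd : (ε₂ - 1) / 2 * 2 = ε₂ - 1 := by rcases hε₂ with rfl | rfl <;> rfl
  have hexp : ε₂ * (n - 2 * lam₂) - 1 = ((ε₂ - 1) / 2 - ε₂ * lam₂) * 2 + ε₂ * (n - 1) := by
    linear_combination -hodd
  have hidx : ε₁ * (ε₂ * (n - 2 * lam₂) - 2 * lam₁) =
      ε₁ * ε₂ * (n - 2 * (ε₂ * lam₁ + lam₂)) := by
    linear_combination 2 * ε₁ * lam₁ * hsq
  rw [h₂.2.2.1, map_smul, h₁.2.2.1, h₃.2.2.1, smul_smul, hidx, hexp, zpow_add₀ ha₁,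
    zpow_mul, zpow_mul, mul_zpow, zpow_ofNat]
  congr 1
  push_cast
  ring

lemma comp_apply_Y (h₁ : h.IsSigma ε₁ lam₁ a₁ d₁ σ₁) (h₂ : h.IsSigma ε₂ lam₂ a₂ d₂ σ₂)
    (h₃ : h.IsSigma (ε₁ * ε₂) (ε₂ * lam₁ + lam₂) (a₁ ^ ε₂ * a₂)
      (d₁ * d₂ * a₁ ^ ((ε₂ - 1) / 2 - ε₂ * lam₂)) σ₃)
    (hε₁ : ε₁ = 1 ∨ ε₁ = -1) (hε₂ : ε₂ = 1 ∨ ε₂ = -1) (ha₁ : a₁ ≠ 0) (n : ℤ) :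
    σ₁ (σ₂ (h.b (.Y n))) = σ₃ (h.b (.Y n)) := by
  have hsq : ε₂ * ε₂ = 1 := by rcases hε₂ with rfl | rfl <;> rfl
  have hidx : ε₁ * (ε₂ * n + (ε₂ - 1) / 2 - ε₂ * lam₂) + (ε₁ - 1) / 2 - ε₁ * lam₁ =
      ε₁ * ε₂ * n + (ε₁ * ε₂ - 1) / 2 - ε₁ * ε₂ * (ε₂ * lam₁ + lam₂) := by
    linear_combination half_shift_mul hε₁ hε₂ + ε₁ * lam₁ * hsq
  rw [h₂.2.2.2, map_smul, h₁.2.2.2, h₃.2.2.2, smul_smul, hidx,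
    show ε₂ * n + (ε₂ - 1) / 2 - ε₂ * lam₂ = (ε₂ - 1) / 2 - ε₂ * lam₂ + ε₂ * n by ring,
    zpow_add₀ ha₁, mul_zpow, zpow_mul]
  congr 1
  ring

end ExtSV.IsSigma

theorem extSV_sigma_comp_general {g : Type*} [LieRing g] [LieAlgebra ℂ g] (h : ExtSV g)
    (ε₁ ε₂ lam₁ lam₂ : ℤ) (hε₁ : ε₁ = 1 ∨ ε₁ = -1) (hε₂ : ε₂ = 1 ∨ ε₂ = -1)
    (a₁ a₂ d₁ d₂ : ℂ) (ha₁ : a₁ ≠ 0)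
    (σ₁ σ₂ σ₃ : g →ₗ[ℂ] g)
    (h₁ : h.IsSigma ε₁ lam₁ a₁ d₁ σ₁) (h₂ : h.IsSigma ε₂ lam₂ a₂ d₂ σ₂)
    (h₃ : h.IsSigma (ε₁ * ε₂) (ε₂ * lam₁ + lam₂) (a₁ ^ ε₂ * a₂)
      (d₁ * d₂ * a₁ ^ ((ε₂ - 1) / 2 - ε₂ * lam₂)) σ₃) :
    ∀ x : g, σ₁ (σ₂ x) = σ₃ x := by
  suffices σ₁ ∘ₗ σ₂ = σ₃ from LinearMap.congr_fun this
  refine h.b.ext fun i => ?_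
  cases i with
  | L n => exact h₁.comp_apply_L h₂ h₃ n
  | M n => exact h₁.comp_apply_M h₂ h₃ hε₂ ha₁ n
  | N n => exact h₁.comp_apply_N h₂ h₃ n
  | Y n => exact h₁.comp_apply_Y h₂ h₃ hε₁ hε₂ ha₁ n

/-- Composition rule for the automorphisms `σ(ε, λ, a, d)` of `sv~`:
`σ(ε₁,λ₁,a₁,d₁) ∘ σ(ε₂,λ₂,a₂,d₂) = σ(ε₁ε₂, ε₂λ₁+λ₂, a₁^{ε₂}a₂, d₁d₂a₁^{(ε₂−1)/2−ε₂λ₂})`. -/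
theorem extSV_sigma_comp {g : Type*} [LieRing g] [LieAlgebra ℂ g] (h : ExtSV g)
    (ε₁ ε₂ lam₁ lam₂ : ℤ) (hε₁ : ε₁ = 1 ∨ ε₁ = -1) (hε₂ : ε₂ = 1 ∨ ε₂ = -1)
    (a₁ a₂ d₁ d₂ : ℂ) (ha₁ : a₁ ≠ 0) (ha₂ : a₂ ≠ 0) (hd₁ : d₁ ≠ 0) (hd₂ : d₂ ≠ 0)
    (σ₁ σ₂ σ₃ : g →ₗ[ℂ] g)
    (h₁ : h.IsSigma ε₁ lam₁ a₁ d₁ σ₁) (h₂ : h.IsSigma ε₂ lam₂ a₂ d₂ σ₂)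
    (h₃ : h.IsSigma (ε₁ * ε₂) (ε₂ * lam₁ + lam₂) (a₁ ^ ε₂ * a₂)
      (d₁ * d₂ * a₁ ^ ((ε₂ - 1) / 2 - ε₂ * lam₂)) σ₃) :
    ∀ x : g, σ₁ (σ₂ x) = σ₃ x :=
  extSV_sigma_comp_general h ε₁ ε₂ lam₁ lam₂ hε₁ hε₂ a₁ a₂ d₁ d₂ ha₁ σ₁ σ₂ σ₃ h₁ h₂ h₃
end
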